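/- arXiv:2205.03657 — 8 statements merged into one kernel-verified Lean document; each statement's English description precedes it below -/
import Mathlib

section
/- For every P-space A ⊆ G and every separable complex Hilbert space K, the associated pair (U^{(A,K)}, V^{(A,K)}) on L²(A,K) is a weak Weyl pair with commuting range projections: V^{(A,K)} is a strongly continuous semigroup of isometries, U^{(A,K)} is a strongly continuous group of unitaries, U_χ V_a = χ(a) V_a U_χ for all χ ∈ Ĝ and a ∈ P, and the projections V_a V_a* (a ∈ P) pairwise commute. -/
open MeasureTheory Complex

noncomputable section

namespace WeylPairAux

open Filter Set Topology ENNReal NNReal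

set_option linter.unusedSectionVars false

variable {G : Type*} [AddCommGroup G] [TopologicalSpace G] [IsTopologicalAddGroup G]
    [LocallyCompactSpace G] [SecondCountableTopology G] [T2Space G]
    [MeasurableSpace G] [BorelSpace G]
    {μ : Measure G} [μ.IsAddHaarMeasure]
    {A : Set G}
    {K : Type*} [NormedAddCommGroup K] [InnerProductSpace ℂ K] [CompleteSpace K]
    [SecondCountableTopology K]

theorem indicator_congr_ae (hA : MeasurableSet A) {f g : G → K}
    (h : f =ᵐ[μ.restrict A] g) : A.indicator f =ᵐ[μ] A.indicator g := by
  have h' : ∀ᵐ x ∂μ, x ∈ A → f x = g x := (ae_restrict_iff' hA).1 h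
  filter_upwards [h'] with x hx
  by_cases hxA : x ∈ A
  · simpa [Set.indicator_of_mem hxA] using hx hxA
  · simp [Set.indicator_of_notMem hxA]

theorem memLp_ind (hA : MeasurableSet A) (f : Lp K 2 (μ.restrict A)) :
    MemLp (A.indicator (⇑f)) 2 μ :=
  ⟨(aestronglyMeasurable_indicator_iff hA).2 (Lp.aestronglyMeasurable f),
   by rw [eLpNorm_indicator_eq_eLpNorm_restrict hA]; exact Lp.eLpNorm_lt_top f⟩

/-- Extension by zero, as a bare function. -/
def extFun (hA : MeasurableSet A) (μ : Measure G) [μ.IsAddHaarMeasure]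
    (f : Lp K 2 (μ.restrict A)) : Lp K 2 μ :=
  (memLp_ind hA f).toLp _

theorem extFun_coe (hA : MeasurableSet A) (f : Lp K 2 (μ.restrict A)) :
    ⇑(extFun hA μ f) =ᵐ[μ] A.indicator ⇑f := MemLp.coeFn_toLp _

theorem extFun_norm (hA : MeasurableSet A) (f : Lp K 2 (μ.restrict A)) :
    ‖extFun hA μ f‖ = ‖f‖ := by
  rw [extFun, Lp.norm_toLp, eLpNorm_indicator_eq_eLpNorm_restrict hA, Lp.norm_def]

/-- Extension by zero as a continuous linear map. -/
def extCLM (hA : MeasurableSet A) (μ : Measure G) [μ.IsAddHaarMeasure] :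
    Lp K 2 (μ.restrict A) →L[ℂ] Lp K 2 μ :=
  LinearMap.mkContinuous
    { toFun := extFun hA μ
      map_add' := fun f g => by
        apply Lp.ext
        refine (extFun_coe hA (f + g)).trans ?_
        refine ((Lp.coeFn_add (extFun hA μ f) (extFun hA μ g)).trans
          (((extFun_coe hA f).add (extFun_coe hA g)))).symm.congr_right.mp ?_
        refine (indicator_congr_ae hA (Lp.coeFn_add f g)).trans (Eventually.of_forall ?_)
        intro y
        by_cases hy : y ∈ A <;> simp [Set.indicator_of_mem, Set.indicator_of_notMem, hy]
      map_smul' := fun c f => by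
        apply Lp.ext
        refine (extFun_coe hA (c • f)).trans ?_
        refine ((Lp.coeFn_smul c (extFun hA μ f)).trans
          ((extFun_coe hA f).const_smul c)).symm.congr_right.mp ?_
        refine (indicator_congr_ae hA (Lp.coeFn_smul c f)).trans (Eventually.of_forall ?_)
        intro y
        by_cases hy : y ∈ A <;> simp [Set.indicator_of_mem, Set.indicator_of_notMem, hy] }
    1 (fun f => by rw [one_mul]; exact le_of_eq (extFun_norm hA f))

theorem extCLM_coe (hA : MeasurableSet A) (f : Lp K 2 (μ.restrict A)) :
    ⇑(extCLM hA μ f) =ᵐ[μ] A.indicator ⇑f := extFun_coe hA f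

/-- Restriction, as a bare function. -/
def resFun (A : Set G) (μ : Measure G) [μ.IsAddHaarMeasure] (g : Lp K 2 μ) :
    Lp K 2 (μ.restrict A) :=
  ((Lp.memLp g).restrict A).toLp _

theorem resFun_coe (g : Lp K 2 μ) : ⇑(resFun A μ g) =ᵐ[μ.restrict A] ⇑g :=
  MemLp.coeFn_toLp _

/-- Restriction as a continuous linear map. -/
def resCLM (A : Set G) (μ : Measure G) [μ.IsAddHaarMeasure] :
    Lp K 2 μ →L[ℂ] Lp K 2 (μ.restrict A) :=
  LinearMap.mkContinuous
    { toFun := resFun A μ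
      map_add' := fun f g => by
        apply Lp.ext
        refine (resFun_coe (f + g)).trans ?_
        refine ((Lp.coeFn_add (resFun A μ f) (resFun A μ g)).trans
          ((resFun_coe f).add (resFun_coe g))).symm.congr_right.mp ?_
        exact ae_restrict_of_ae (Lp.coeFn_add f g)
      map_smul' := fun c f => by
        apply Lp.ext
        refine (resFun_coe (c • f)).trans ?_
        refine ((Lp.coeFn_smul c (resFun A μ f)).trans
          ((resFun_coe f).const_smul c)).symm.congr_right.mp ?_
        exact ae_restrict_of_ae (Lp.coeFn_smul c f) }
    1 (fun g => by
      rw [one_mul]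
      show ‖resFun A μ g‖ ≤ ‖g‖
      rw [resFun, Lp.norm_toLp, Lp.norm_def]
      exact ENNReal.toReal_mono (Lp.eLpNorm_lt_top g).ne
        (eLpNorm_mono_measure _ Measure.restrict_le_self))

theorem resCLM_coe (g : Lp K 2 μ) : ⇑(resCLM A μ g) =ᵐ[μ.restrict A] ⇑g :=
  resFun_coe g

/-- Translation by `a` on `L²(G)`. -/
def transCLM (μ : Measure G) [μ.IsAddHaarMeasure] (a : G) : Lp K 2 μ →L[ℂ] Lp K 2 μ :=
  (Lp.compMeasurePreservingₗᵢ ℂ (fun y => y - a)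
    (measurePreserving_sub_right μ a)).toContinuousLinearMap

theorem transCLM_coe (a : G) (g : Lp K 2 μ) :
    ⇑(transCLM μ a g) =ᵐ[μ] fun y => g (y - a) :=
  Lp.coeFn_compMeasurePreserving g (measurePreserving_sub_right μ a)

/-- The isometry `V_a` on `L²(A)`. -/
def Vop (hA : MeasurableSet A) (μ : Measure G) [μ.IsAddHaarMeasure] (a : G) :
    Lp K 2 (μ.restrict A) →L[ℂ] Lp K 2 (μ.restrict A) :=
  (resCLM A μ).comp ((transCLM μ a).comp (extCLM hA μ))

/-- Transfer of a.e. equalities along translations. -/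
theorem trans_ae (hA : MeasurableSet A) (a : G) {h₁ h₂ : G → K}
    (h : h₁ =ᵐ[μ.restrict A] h₂) :
    (fun y => A.indicator h₁ (y - a)) =ᵐ[μ] fun y => A.indicator h₂ (y - a) := by
  have hmeas : AEMeasurable (fun y : G => y - a) μ :=
    (measurable_id.sub measurable_const).aemeasurable
  have h2 : A.indicator h₁ =ᵐ[μ.map (fun y : G => y - a)] A.indicator h₂ := by
    rw [(measurePreserving_sub_right μ a).map_eq]
    exact indicator_congr_ae hA h
  have := MeasureTheory.ae_eq_comp hmeas h2
  simpa [Function.comp_def] using this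

theorem Vop_coe (hA : MeasurableSet A) (a : G) (f : Lp K 2 (μ.restrict A)) :
    ⇑(Vop hA μ a f) =ᵐ[μ.restrict A] fun y => A.indicator (⇑f) (y - a) := by
  refine (resCLM_coe _).trans ?_
  refine ae_restrict_of_ae ?_
  refine (transCLM_coe a (extCLM hA μ f)).trans ?_
  have := trans_ae (μ := μ) hA a (h₁ := ⇑f) (h₂ := ⇑f) EventuallyEq.rfl
  have h2 : (fun y => (extCLM hA μ f) (y - a)) =ᵐ[μ] fun y => A.indicator (⇑f) (y - a) := by
    have hmeas : AEMeasurable (fun y : G => y - a) μ :=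
      (measurable_id.sub measurable_const).aemeasurable
    have h3 : ⇑(extCLM hA μ f) =ᵐ[μ.map (fun y : G => y - a)] A.indicator ⇑f := by
      rw [(measurePreserving_sub_right μ a).map_eq]
      exact extCLM_coe hA f
    simpa [Function.comp_def] using MeasureTheory.ae_eq_comp hmeas h3
  exact h2

theorem Vop_norm (hA : MeasurableSet A) {P : Set G}
    (hAP : ∀ x ∈ A, ∀ p ∈ P, x + p ∈ A) {a : G} (ha : a ∈ P)
    (f : Lp K 2 (μ.restrict A)) : ‖Vop hA μ a f‖ = ‖f‖ := by
  rw [Lp.norm_def, eLpNorm_congr_ae (Vop_coe hA a f),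
    ← eLpNorm_indicator_eq_eLpNorm_restrict hA]
  have hfix : A.indicator (fun y => A.indicator (⇑f) (y - a))
      = fun y => A.indicator (⇑f) (y - a) := by
    funext y
    by_cases hy : y ∈ A
    · rw [Set.indicator_of_mem hy]
    · rw [Set.indicator_of_notMem hy,
        Set.indicator_of_notMem (fun h => hy (by simpa using hAP _ h a ha))]
  rw [hfix, show (fun y => A.indicator (⇑f) (y - a)) = (A.indicator ⇑f) ∘ (fun y => y - a)
      from rfl,
    eLpNorm_comp_measurePreserving (memLp_ind hA f).1 (measurePreserving_sub_right μ a),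
    eLpNorm_indicator_eq_eLpNorm_restrict hA, ← Lp.norm_def]

theorem Vop_zero (hA : MeasurableSet A) :
    Vop (K := K) hA μ 0 = 1 := by
  refine ContinuousLinearMap.ext fun f => ?_
  rw [ContinuousLinearMap.one_apply]
  apply Lp.ext
  refine (Vop_coe hA 0 f).trans ?_
  filter_upwards [ae_restrict_mem hA] with y hy
  simp [Set.indicator_of_mem, hy]

theorem Vop_comp (hA : MeasurableSet A) {P : Set G}
    (hAP : ∀ x ∈ A, ∀ p ∈ P, x + p ∈ A) (a : G) {b : G} (hb : b ∈ P) :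
    Vop (K := K) hA μ (a + b) = (Vop hA μ a).comp (Vop hA μ b) := by
  refine ContinuousLinearMap.ext fun f => ?_
  rw [ContinuousLinearMap.comp_apply]
  apply Lp.ext
  refine (Vop_coe hA (a + b) f).trans ?_
  refine EventuallyEq.symm ?_
  refine ((Vop_coe hA a (Vop hA μ b f)).trans
    (ae_restrict_of_ae (trans_ae hA a (Vop_coe hA b f)))).trans ?_
  refine Eventually.of_forall fun y => ?_
  dsimp only
  by_cases h1 : y - a ∈ A
  · rw [Set.indicator_of_mem h1, sub_add_eq_sub_sub]
  · rw [Set.indicator_of_notMem h1, Set.indicator_of_notMem (fun hmem => h1 ?_)]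
    have := hAP _ hmem b hb
    simpa [sub_add_eq_sub_sub] using this

theorem gen_coe (hA : MeasurableSet A) {φ : G → G} (hφ : MeasurePreserving φ μ μ)
    (f : Lp K 2 (μ.restrict A)) :
    ⇑(resCLM A μ ((Lp.compMeasurePreservingₗᵢ ℂ φ hφ).toContinuousLinearMap (extCLM hA μ f)))
      =ᵐ[μ.restrict A] fun y => A.indicator (⇑f) (φ y) := by
  refine (resCLM_coe _).trans (ae_restrict_of_ae ?_)
  refine (Lp.coeFn_compMeasurePreserving _ hφ).trans ?_
  have h3 : ⇑(extCLM hA μ f) =ᵐ[μ.map φ] A.indicator ⇑f := by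
    rw [hφ.map_eq]; exact extCLM_coe hA f
  simpa [Function.comp_def] using MeasureTheory.ae_eq_comp hφ.measurable.aemeasurable h3

/-- The operator `W_a`, adjoint to `V_a`. -/
def Wop (hA : MeasurableSet A) (μ : Measure G) [μ.IsAddHaarMeasure] (a : G) :
    Lp K 2 (μ.restrict A) →L[ℂ] Lp K 2 (μ.restrict A) :=
  (resCLM A μ).comp (((Lp.compMeasurePreservingₗᵢ ℂ (fun y => y + a)
    (measurePreserving_add_right μ a)).toContinuousLinearMap).comp (extCLM hA μ))

theorem Wop_coe (hA : MeasurableSet A) (a : G) (g : Lp K 2 (μ.restrict A)) :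
    ⇑(Wop hA μ a g) =ᵐ[μ.restrict A] fun y => A.indicator (⇑g) (y + a) :=
  gen_coe hA (measurePreserving_add_right μ a) g

set_option maxHeartbeats 1000000 in
theorem adjoint_Vop (hA : MeasurableSet A) (a : G) :
    ContinuousLinearMap.adjoint (Vop (K := K) hA μ a) = Wop hA μ a := by
  symm
  rw [ContinuousLinearMap.eq_adjoint_iff]
  intro g f
  have h1 : (fun y => (inner ℂ (⇑(Wop hA μ a g) y) (⇑f y) : ℂ)) =ᵐ[μ.restrict A]
      fun y => inner ℂ (A.indicator (⇑g) (y + a)) (⇑f y) :=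
    (Wop_coe hA a g).mono fun y hy => by simp only [hy]
  have h2 : (fun y => (inner ℂ (⇑g y) (⇑(Vop hA μ a f) y) : ℂ)) =ᵐ[μ.restrict A]
      fun y => inner ℂ (⇑g y) (A.indicator (⇑f) (y - a)) :=
    (Vop_coe hA a f).mono fun y hy => by simp only [hy]
  rw [L2.inner_def, L2.inner_def, integral_congr_ae h1, integral_congr_ae h2,
    ← integral_indicator hA, ← integral_indicator hA,
    ← integral_add_right_eq_self
      (fun y => A.indicator (fun z => (inner ℂ (⇑g z) (A.indicator (⇑f) (z - a)) : ℂ)) y) a]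
  congr 1
  funext y
  by_cases hy : y ∈ A <;> by_cases hya : y + a ∈ A <;>
    simp [Set.indicator_of_mem, Set.indicator_of_notMem, hy, hya, add_sub_cancel_right]

theorem indicator_ae {S : Set G} {h₁ h₂ : G → K} (h : h₁ =ᵐ[μ.restrict A] h₂) :
    S.indicator h₁ =ᵐ[μ.restrict A] S.indicator h₂ :=
  h.mono fun y hy => by
    by_cases hS : y ∈ S
    · rw [Set.indicator_of_mem hS, Set.indicator_of_mem hS, hy]
    · rw [Set.indicator_of_notMem hS, Set.indicator_of_notMem hS]

theorem proj_coe (hA : MeasurableSet A) (a : G) (g : Lp K 2 (μ.restrict A)) :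
    ⇑(Vop hA μ a (Wop hA μ a g)) =ᵐ[μ.restrict A]
      ((fun z => z - a) ⁻¹' A).indicator ⇑g := by
  refine ((Vop_coe hA a _).trans
    (ae_restrict_of_ae (trans_ae hA a (Wop_coe hA a g))).symm.symm).trans ?_
  filter_upwards [ae_restrict_mem hA] with y hy
  by_cases h : y - a ∈ A
  · rw [Set.indicator_of_mem h]
    rw [sub_add_cancel, Set.indicator_of_mem hy]
    exact (Set.indicator_of_mem (show y ∈ (fun z => z - a) ⁻¹' A from h) _).symm
  · rw [Set.indicator_of_notMem h]
    exact (Set.indicator_of_notMem (show y ∉ (fun z => z - a) ⁻¹' A from h) _).symm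

theorem proj_comm (hA : MeasurableSet A) (a b : G) :
    ((Vop (K := K) hA μ a).comp (Wop hA μ a)).comp ((Vop hA μ b).comp (Wop hA μ b))
      = ((Vop hA μ b).comp (Wop hA μ b)).comp ((Vop hA μ a).comp (Wop hA μ a)) := by
  refine ContinuousLinearMap.ext fun g => ?_
  simp only [ContinuousLinearMap.comp_apply]
  apply Lp.ext
  refine ((proj_coe hA a _).trans (indicator_ae (proj_coe hA b g))).trans ?_
  refine EventuallyEq.symm (((proj_coe hA b _).trans (indicator_ae (proj_coe hA a g))).trans ?_)
  refine Eventually.of_forall fun y => ?_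
  rw [Set.indicator_indicator, Set.indicator_indicator, Set.inter_comm]

theorem circle_nnnorm (z : Circle) : ‖(z : ℂ)‖₊ = 1 :=
  NNReal.coe_injective (by simp [Circle.norm_coe])

theorem chi_continuous (χ : PontryaginDual (Multiplicative G)) :
    Continuous fun y : G => ((χ (Multiplicative.ofAdd y) : Circle) : ℂ) :=
  continuous_subtype_val.comp (map_continuous χ)

theorem memLp_mul (χ : PontryaginDual (Multiplicative G)) (f : Lp K 2 (μ.restrict A)) :
    MemLp (fun y => ((χ (Multiplicative.ofAdd y) : Circle) : ℂ) • ⇑f y) 2 (μ.restrict A) := by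
  refine ⟨((chi_continuous χ).aestronglyMeasurable).smul (Lp.aestronglyMeasurable f), ?_⟩
  have heq : eLpNorm (fun y => ((χ (Multiplicative.ofAdd y) : Circle) : ℂ) • ⇑f y) 2
      (μ.restrict A) = eLpNorm (⇑f) 2 (μ.restrict A) :=
    eLpNorm_congr_nnnorm_ae (Eventually.of_forall fun y => by
      rw [nnnorm_smul, circle_nnnorm, one_mul])
  rw [heq]
  exact Lp.eLpNorm_lt_top f

/-- Multiplication by a character, as a bare function. -/
def mulFun (χ : PontryaginDual (Multiplicative G)) (f : Lp K 2 (μ.restrict A)) :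
    Lp K 2 (μ.restrict A) :=
  (memLp_mul χ f).toLp _

theorem mulFun_coe (χ : PontryaginDual (Multiplicative G)) (f : Lp K 2 (μ.restrict A)) :
    ⇑(mulFun χ f) =ᵐ[μ.restrict A]
      fun y => ((χ (Multiplicative.ofAdd y) : Circle) : ℂ) • ⇑f y :=
  MemLp.coeFn_toLp _

theorem mulFun_norm (χ : PontryaginDual (Multiplicative G)) (f : Lp K 2 (μ.restrict A)) :
    ‖mulFun χ f‖ = ‖f‖ := by
  rw [mulFun, Lp.norm_toLp, Lp.norm_def]
  congr 1
  exact eLpNorm_congr_nnnorm_ae (Eventually.of_forall fun y => by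
    rw [nnnorm_smul, circle_nnnorm, one_mul])

/-- The unitary `U_χ` on `L²(A)`. -/
def Uop (A : Set G) (μ : Measure G) [μ.IsAddHaarMeasure] (χ : PontryaginDual (Multiplicative G)) :
    Lp K 2 (μ.restrict A) →L[ℂ] Lp K 2 (μ.restrict A) :=
  LinearMap.mkContinuous
    { toFun := mulFun χ
      map_add' := fun f g => by
        apply Lp.ext
        filter_upwards [mulFun_coe χ (f + g), Lp.coeFn_add f g,
          Lp.coeFn_add (mulFun χ f) (mulFun χ g), mulFun_coe χ f, mulFun_coe χ g] with
          y h1 h2 h3 h4 h5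
        simp only [h1, h2, h3, h4, h5, Pi.add_apply, smul_add]
      map_smul' := fun c f => by
        apply Lp.ext
        filter_upwards [mulFun_coe χ (c • f), Lp.coeFn_smul c f,
          Lp.coeFn_smul c (mulFun χ f), mulFun_coe χ f] with y h1 h2 h3 h4
        simp only [h1, h2, h3, h4, Pi.smul_apply, RingHom.id_apply]
        rw [smul_comm] }
    1 (fun f => by rw [one_mul]; exact le_of_eq (mulFun_norm χ f))

theorem Uop_coe (χ : PontryaginDual (Multiplicative G)) (f : Lp K 2 (μ.restrict A)) :
    ⇑(Uop A μ χ f) =ᵐ[μ.restrict A]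
      fun y => ((χ (Multiplicative.ofAdd y) : Circle) : ℂ) • ⇑f y :=
  mulFun_coe χ f

theorem Uop_norm (χ : PontryaginDual (Multiplicative G)) (f : Lp K 2 (μ.restrict A)) :
    ‖Uop A μ χ f‖ = ‖f‖ :=
  mulFun_norm χ f

theorem Uop_one : Uop (K := K) A μ 1 = 1 := by
  refine ContinuousLinearMap.ext fun f => ?_
  rw [ContinuousLinearMap.one_apply]
  apply Lp.ext
  refine (Uop_coe 1 f).trans (Eventually.of_forall fun y => ?_)
  have h1 : ((1 : PontryaginDual (Multiplicative G)) (Multiplicative.ofAdd y) : Circle) = 1 :=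
    rfl
  simp [h1]

theorem Uop_mul (χ₁ χ₂ : PontryaginDual (Multiplicative G)) :
    Uop (K := K) A μ (χ₁ * χ₂) = (Uop A μ χ₁).comp (Uop A μ χ₂) := by
  refine ContinuousLinearMap.ext fun f => ?_
  rw [ContinuousLinearMap.comp_apply]
  apply Lp.ext
  filter_upwards [Uop_coe (χ₁ * χ₂) f, Uop_coe χ₁ (Uop A μ χ₂ f), Uop_coe χ₂ f] with y h1 h2 h3
  have hmul : ((χ₁ * χ₂) (Multiplicative.ofAdd y) : Circle)
      = χ₁ (Multiplicative.ofAdd y) * χ₂ (Multiplicative.ofAdd y) := rfl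
  simp only [h1, h2, h3, hmul, Circle.coe_mul, mul_smul]

theorem weyl_relation (hA : MeasurableSet A) (χ : PontryaginDual (Multiplicative G)) (a : G) :
    (Uop (K := K) A μ χ).comp (Vop hA μ a)
      = ((χ (Multiplicative.ofAdd a) : Circle) : ℂ) • ((Vop hA μ a).comp (Uop A μ χ)) := by
  refine ContinuousLinearMap.ext fun f => ?_
  rw [ContinuousLinearMap.smul_apply, ContinuousLinearMap.comp_apply,
    ContinuousLinearMap.comp_apply]
  apply Lp.ext
  have key : ∀ y : G, ((χ (Multiplicative.ofAdd y) : Circle) : ℂ)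
      = ((χ (Multiplicative.ofAdd a) : Circle) : ℂ)
        * ((χ (Multiplicative.ofAdd (y - a)) : Circle) : ℂ) := by
    intro y
    rw [← Circle.coe_mul, ← map_mul, ← ofAdd_add, show a + (y - a) = y from by abel]
  filter_upwards [Uop_coe χ (Vop hA μ a f), Vop_coe hA a f,
    Lp.coeFn_smul ((χ (Multiplicative.ofAdd a) : Circle) : ℂ) (Vop hA μ a (Uop A μ χ f)),
    (Vop_coe hA a (Uop A μ χ f)).trans
      (ae_restrict_of_ae (trans_ae hA a (Uop_coe χ f)))] with y h1 h2 h3 h4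
  simp only [h1, h2, h3, h4, Pi.smul_apply]
  by_cases h : y - a ∈ A
  · rw [Set.indicator_of_mem h, Set.indicator_of_mem h]
    rw [key y, mul_smul]
  · rw [Set.indicator_of_notMem h, Set.indicator_of_notMem h, smul_zero, smul_zero]

theorem Vop_continuous (hA : MeasurableSet A) (f : Lp K 2 (μ.restrict A)) :
    Continuous fun a : G => Vop hA μ a f := by
  have hcm : Continuous fun a : G =>
      (ContinuousMap.mk (fun y : G => y - a) (by continuity) : C(G, G)) :=
    ContinuousMap.continuous_of_continuous_uncurry _ (continuous_snd.sub continuous_fst)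
  have h := Continuous.compMeasurePreservingLp (μ := μ) (ν := μ)
    (f := fun _ : G => extCLM hA μ f)
    (g := fun a : G => (ContinuousMap.mk (fun y : G => y - a) (by continuity) : C(G, G)))
    continuous_const hcm (fun a => measurePreserving_sub_right μ a) (by simp)
  exact (resCLM A μ).continuous.comp h

theorem Uop_continuous (f : Lp K 2 (μ.restrict A)) :
    Continuous fun χ : PontryaginDual (Multiplicative G) => Uop A μ χ f := by
  haveI : LocallyCompactSpace (Multiplicative G) := inferInstanceAs (LocallyCompactSpace G)
  haveI : SecondCountableTopology (Multiplicative G) :=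
    inferInstanceAs (SecondCountableTopology G)
  haveI : FirstCountableTopology (PontryaginDual (Multiplicative G)) :=
    (ContinuousMonoidHom.isEmbedding_toContinuousMap _ _).firstCountableTopology
  rw [continuous_iff_continuousAt]
  intro χ₀
  have heval : ∀ y : G, Continuous fun χ : PontryaginDual (Multiplicative G) =>
      ((χ (Multiplicative.ofAdd y) : Circle) : ℂ) := fun y =>
    continuous_subtype_val.comp <| ContinuousEvalConst.continuous_eval_const
      (F := ContinuousMonoidHom (Multiplicative G) Circle) (Multiplicative.ofAdd y)
  set d : PontryaginDual (Multiplicative G) → G → K := fun χ y =>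
    (((χ (Multiplicative.ofAdd y) : Circle) : ℂ)
      - ((χ₀ (Multiplicative.ofAdd y) : Circle) : ℂ)) • ⇑f y with hd
  have hnorm : ∀ χ, ‖Uop A μ χ f - Uop A μ χ₀ f‖ = (eLpNorm (d χ) 2 (μ.restrict A)).toReal := by
    intro χ
    rw [Lp.norm_def]
    congr 1
    apply eLpNorm_congr_ae
    filter_upwards [Lp.coeFn_sub (Uop A μ χ f) (Uop A μ χ₀ f), Uop_coe χ f, Uop_coe χ₀ f]
      with y h1 h2 h3
    simp only [h1, Pi.sub_apply, h2, h3, hd, sub_smul]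
  rw [ContinuousAt, tendsto_iff_norm_sub_tendsto_zero]
  have key : Tendsto (fun χ => eLpNorm (d χ) 2 (μ.restrict A)) (𝓝 χ₀) (𝓝 0) := by
    have h2 : ∀ χ, eLpNorm (d χ) 2 (μ.restrict A)
        = (∫⁻ y, (‖d χ y‖₊ : ℝ≥0∞) ^ (2 : ℝ) ∂(μ.restrict A)) ^ (1 / (2 : ℝ)) := by
      intro χ
      rw [eLpNorm_eq_lintegral_rpow_enorm_toReal (by norm_num) (by norm_num)]
      norm_num [enorm_eq_nnnorm]
    have hI : Tendsto (fun χ => ∫⁻ y, (‖d χ y‖₊ : ℝ≥0∞) ^ (2 : ℝ) ∂(μ.restrict A)) (𝓝 χ₀)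
        (𝓝 (∫⁻ (_ : G), 0 ∂(μ.restrict A))) := by
      apply tendsto_lintegral_filter_of_dominated_convergence
        (fun y => ((2 : ℝ≥0∞) * (‖⇑f y‖₊ : ℝ≥0∞)) ^ (2 : ℝ))
      · refine Eventually.of_forall fun χ => ?_
        have hsm : StronglyMeasurable (d χ) :=
          (((chi_continuous χ).sub (chi_continuous χ₀)).stronglyMeasurable).smul
            (Lp.stronglyMeasurable f)
        exact (hsm.nnnorm.measurable.coe_nnreal_ennreal).pow_const _
      · refine Eventually.of_forall fun χ => Eventually.of_forall fun y => ?_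
        apply ENNReal.rpow_le_rpow _ (by norm_num)
        have hb : ‖d χ y‖₊ ≤ 2 * ‖⇑f y‖₊ := by
          rw [hd]
          simp only
          rw [nnnorm_smul]
          refine mul_le_mul_of_nonneg_right ?_ zero_le
          refine (nnnorm_sub_le _ _).trans ?_
          rw [circle_nnnorm, circle_nnnorm]
          norm_num
        calc (‖d χ y‖₊ : ℝ≥0∞) ≤ ((2 * ‖⇑f y‖₊ : ℝ≥0) : ℝ≥0∞) := ENNReal.coe_le_coe.2 hb
          _ = (2 : ℝ≥0∞) * (‖⇑f y‖₊ : ℝ≥0∞) := by norm_cast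
      · have hf2 : ∫⁻ y, (‖⇑f y‖₊ : ℝ≥0∞) ^ (2 : ℝ) ∂(μ.restrict A) < ∞ := by
          have h3 := lintegral_rpow_enorm_lt_top_of_eLpNorm_lt_top (p := (2 : ℝ≥0∞))
            (μ := μ.restrict A) (f := ⇑f) (by norm_num) (by norm_num) (Lp.eLpNorm_lt_top f)
          simpa [enorm_eq_nnnorm] using h3
        have h4 : ∫⁻ y, ((2 : ℝ≥0∞) * (‖⇑f y‖₊ : ℝ≥0∞)) ^ (2 : ℝ) ∂(μ.restrict A)
            = (2 : ℝ≥0∞) ^ (2 : ℝ) * ∫⁻ y, (‖⇑f y‖₊ : ℝ≥0∞) ^ (2 : ℝ) ∂(μ.restrict A) := by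
          rw [← lintegral_const_mul' _ _ (by simp)]
          congr with y
          rw [ENNReal.mul_rpow_of_nonneg _ _ (by norm_num)]
        rw [h4]
        exact (ENNReal.mul_lt_top (ENNReal.rpow_lt_top_of_nonneg (by norm_num) (by simp)) hf2).ne
      · refine Eventually.of_forall fun y => ?_
        have hc : Tendsto (fun χ => (‖d χ y‖₊ : ℝ≥0∞) ^ (2 : ℝ)) (𝓝 χ₀)
            (𝓝 ((‖d χ₀ y‖₊ : ℝ≥0∞) ^ (2 : ℝ))) := by
          refine (ENNReal.continuous_rpow_const.tendsto _).comp ?_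
          refine (ENNReal.continuous_coe.tendsto _).comp ?_
          exact ((((heval y).sub continuous_const).smul continuous_const).nnnorm).tendsto χ₀
        have h0 : d χ₀ y = 0 := by rw [hd]; simp
        rw [h0] at hc
        simpa [ENNReal.zero_rpow_of_pos] using hc
    rw [lintegral_zero] at hI
    have h5 := ((ENNReal.continuous_rpow_const (y := 1 / (2 : ℝ))).tendsto 0).comp hI
    rw [show ((0 : ℝ≥0∞) ^ (1 / (2 : ℝ))) = 0 from by
      rw [ENNReal.zero_rpow_of_pos]; norm_num] at h5
    exact h5.congr fun χ => (h2 χ).symm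
  have hto := (ENNReal.tendsto_toReal (by simp : (0 : ℝ≥0∞) ≠ ⊤)).comp key
  refine Tendsto.congr (fun χ => (hnorm χ).symm) ?_
  exact hto

end WeylPairAux

/-- For every P-space `A ⊆ G` and every separable complex Hilbert space `K`,
the associated pair `(U^{(A,K)}, V^{(A,K)})` on `L²(A,K)` exists and is a weak Weyl pair with
commuting range projections. -/
theorem pSpace_pair_is_weak_weyl_pair
    {G : Type*} [AddCommGroup G] [TopologicalSpace G] [IsTopologicalAddGroup G]
    [LocallyCompactSpace G] [SecondCountableTopology G] [T2Space G]
    [MeasurableSpace G] [BorelSpace G]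
    (μ : Measure G) [μ.IsAddHaarMeasure]
    (P : Set G) (hPclosed : IsClosed P) (hP0 : (0 : G) ∈ P)
    (hPadd : ∀ a ∈ P, ∀ b ∈ P, a + b ∈ P)
    (hPgen : ∀ x : G, ∃ a ∈ P, ∃ b ∈ P, x = a - b)
    (hPint : P ⊆ closure (interior P))
    (A : Set G) (hAne : A.Nonempty) (hAclosed : IsClosed A)
    (hAP : ∀ x ∈ A, ∀ p ∈ P, x + p ∈ A)
    (K : Type*) [NormedAddCommGroup K] [InnerProductSpace ℂ K] [CompleteSpace K]
    [SecondCountableTopology K] :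
    ∃ (U : PontryaginDual (Multiplicative G) →
        Lp K 2 (μ.restrict A) →L[ℂ] Lp K 2 (μ.restrict A))
      (V : G → Lp K 2 (μ.restrict A) →L[ℂ] Lp K 2 (μ.restrict A)),
      -- the defining formulas for the pair associated to the `P`-space `A` with multiplicity `K`
      (∀ (χ : PontryaginDual (Multiplicative G)) (f : Lp K 2 (μ.restrict A)),
        ⇑(U χ f) =ᵐ[μ.restrict A]
          fun y => (χ (Multiplicative.ofAdd y) : ℂ) • (f : G → K) y) ∧
      (∀ a ∈ P, ∀ f : Lp K 2 (μ.restrict A),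
        ⇑(V a f) =ᵐ[μ.restrict A] fun y => A.indicator (⇑f) (y - a)) ∧
      -- `U` is a strongly continuous group of unitaries
      U 1 = 1 ∧
      (∀ χ₁ χ₂, U (χ₁ * χ₂) = U χ₁ ∘L U χ₂) ∧
      (∀ χ f, ‖U χ f‖ = ‖f‖) ∧
      (∀ f, Continuous fun χ => U χ f) ∧
      -- `V` is a strongly continuous semigroup of isometries
      V 0 = 1 ∧
      (∀ a ∈ P, ∀ b ∈ P, V (a + b) = V a ∘L V b) ∧
      (∀ a ∈ P, ∀ f, ‖V a f‖ = ‖f‖) ∧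
      (∀ f, ContinuousOn (fun a => V a f) P) ∧
      -- the weak Weyl commutation relation
      (∀ (χ : PontryaginDual (Multiplicative G)), ∀ a ∈ P,
        U χ ∘L V a = (χ (Multiplicative.ofAdd a) : ℂ) • (V a ∘L U χ)) ∧
      -- commuting range projections
      (∀ a ∈ P, ∀ b ∈ P,
        (V a ∘L ContinuousLinearMap.adjoint (V a)) ∘L
          (V b ∘L ContinuousLinearMap.adjoint (V b)) =
        (V b ∘L ContinuousLinearMap.adjoint (V b)) ∘L
          (V a ∘L ContinuousLinearMap.adjoint (V a))) := by
  have hA : MeasurableSet A := hAclosed.measurableSet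
  refine ⟨WeylPairAux.Uop A μ, WeylPairAux.Vop hA μ, ?_, ?_, ?_, ?_, ?_, ?_, ?_, ?_, ?_, ?_,
    ?_, ?_⟩
  · exact fun χ f => WeylPairAux.Uop_coe χ f
  · exact fun a _ f => WeylPairAux.Vop_coe hA a f
  · exact WeylPairAux.Uop_one
  · exact fun χ₁ χ₂ => WeylPairAux.Uop_mul χ₁ χ₂
  · exact fun χ f => WeylPairAux.Uop_norm χ f
  · exact fun f => WeylPairAux.Uop_continuous f
  · exact WeylPairAux.Vop_zero hA
  · exact fun a _ b hb => WeylPairAux.Vop_comp hA hAP a hb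
  · exact fun a ha f => WeylPairAux.Vop_norm hA hAP ha f
  · exact fun f => (WeylPairAux.Vop_continuous hA f).continuousOn
  · exact fun χ a _ => WeylPairAux.weyl_relation hA χ a
  · intro a _ b _
    rw [WeylPairAux.adjoint_Vop hA a, WeylPairAux.adjoint_Vop hA b]
    exact WeylPairAux.proj_comm hA a b

end
end

section
/- Let A and B be nonempty closed subsets of G satisfying −P + A ⊆ A and −P + B ⊆ B. If the indicator functions 1_A and 1_B agree μ-almost everywhere (i.e., μ(A Δ B) = 0), then A = B. Consequently, the map sending such a set A to the class of 1_A in L^∞(G,μ) is injective. -/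
open MeasureTheory

noncomputable section

/-- If `A, B` are nonempty closed subsets of `G` with `-P + A ⊆ A` and
`-P + B ⊆ B`, and the indicator functions of `A` and `B` agree `μ`-almost everywhere
(`μ (A ∆ B) = 0`), then `A = B`.  Consequently `A ↦ 1_A ∈ L^∞(G)` is injective on such sets. -/
theorem eq_of_indicator_ae_eq
    {G : Type*} [AddCommGroup G] [TopologicalSpace G] [IsTopologicalAddGroup G]
    [LocallyCompactSpace G] [SecondCountableTopology G] [T2Space G]
    [MeasurableSpace G] [BorelSpace G]
    (μ : Measure G) [μ.IsAddHaarMeasure]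
    (P : Set G) (hPclosed : IsClosed P) (hP0 : (0 : G) ∈ P)
    (hPadd : ∀ a ∈ P, ∀ b ∈ P, a + b ∈ P)
    (hPgen : ∀ x : G, ∃ a ∈ P, ∃ b ∈ P, x = a - b)
    (hPint : P ⊆ closure (interior P))
    (A : Set G) (hAne : A.Nonempty) (hAclosed : IsClosed A)
    (hAinv : ∀ x ∈ A, ∀ p ∈ P, -p + x ∈ A)
    (B : Set G) (hBne : B.Nonempty) (hBclosed : IsClosed B)
    (hBinv : ∀ x ∈ B, ∀ p ∈ P, -p + x ∈ B) :
    (μ (symmDiff A B) = 0 → A = B) ∧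
    ((A.indicator (fun _ => (1 : ℝ)) =ᵐ[μ] B.indicator fun _ => (1 : ℝ)) → A = B) := by
  have key : ∀ (S T : Set G), IsClosed T → (∀ x ∈ S, ∀ p ∈ P, -p + x ∈ S) →
      μ (S \ T) = 0 → S ⊆ T := by
    intro S T hTc hSi h x hx
    set U : Set G := (fun z => x - z) ⁻¹' (interior P) with hUdef
    have hUopen : IsOpen U :=
      isOpen_interior.preimage (continuous_const.sub continuous_id)
    have hUS : U ⊆ S := by
      intro z hz
      have : -(x - z) + x ∈ S := hSi x hx _ (interior_subset hz)
      simpa using this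
    have hUT : U ⊆ T := by
      by_contra hc
      rw [Set.not_subset] at hc
      obtain ⟨z, hzU, hzT⟩ := hc
      have hopen : IsOpen (U \ T) := hUopen.sdiff hTc
      have hpos : 0 < μ (U \ T) := hopen.measure_pos μ ⟨z, hzU, hzT⟩
      have hzero : μ (U \ T) = 0 :=
        measure_mono_null (Set.diff_subset_diff_left hUS) h
      exact hpos.ne' hzero
    have hxcl : x ∈ closure U := by
      have hcl : closure U = (fun z => x - z) ⁻¹' closure (interior P) := by
        have := (Homeomorph.subLeft x).preimage_closure (interior P)
        simpa [hUdef] using this.symm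
      rw [hcl]
      simpa using hPint hP0
    have := closure_mono hUT hxcl
    rwa [hTc.closure_eq] at this
  have part1 : μ (symmDiff A B) = 0 → A = B := by
    intro h
    have h1 : μ (A \ B) = 0 :=
      measure_mono_null (fun z hz => Set.mem_symmDiff.mpr (Or.inl ⟨hz.1, hz.2⟩)) h
    have h2 : μ (B \ A) = 0 :=
      measure_mono_null (fun z hz => Set.mem_symmDiff.mpr (Or.inr ⟨hz.1, hz.2⟩)) h
    exact Set.Subset.antisymm (key A B hBclosed hAinv h1) (key B A hAclosed hBinv h2)
  refine ⟨part1, fun h => part1 ?_⟩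
  have h' : μ {z | ¬ A.indicator (fun _ => (1 : ℝ)) z
      = B.indicator (fun _ => (1 : ℝ)) z} = 0 := ae_iff.mp h
  refine measure_mono_null ?_ h'
  intro z hz
  rcases Set.mem_symmDiff.mp hz with ⟨hzA, hzB⟩ | ⟨hzB, hzA⟩ <;>
    simp [Set.indicator_of_mem, Set.indicator_of_notMem, hzA, hzB]
end
end

section
/- Let A be a closed subset of G with A + P ⊆ A. Then A + Ω ⊆ Int(A), and Int(A) is dense in A. In particular, for every open subset O of G and every dense subset D of O, one has A ∩ O ≠ ∅ if and only if A ∩ D ≠ ∅. -/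
open Pointwise

noncomputable section

/-- If `A` is a closed subset of `G` with `A + P ⊆ A`, then `A + Ω ⊆ Int(A)`
(where `Ω = Int(P)`), the interior of `A` is dense in `A`, and for every open `O ⊆ G` and
every dense subset `D` of `O`, `A ∩ O ≠ ∅ ↔ A ∩ D ≠ ∅`. -/
theorem interior_dense_in_P_space
    {G : Type*} [AddCommGroup G] [TopologicalSpace G] [IsTopologicalAddGroup G]
    [LocallyCompactSpace G] [SecondCountableTopology G] [T2Space G]
    (P : Set G) (hPclosed : IsClosed P) (hP0 : (0 : G) ∈ P)
    (hPadd : ∀ a ∈ P, ∀ b ∈ P, a + b ∈ P)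
    (hPgen : ∀ x : G, ∃ a ∈ P, ∃ b ∈ P, x = a - b)
    (hPint : P ⊆ closure (interior P))
    (A : Set G) (hAclosed : IsClosed A)
    (hAP : ∀ x ∈ A, ∀ p ∈ P, x + p ∈ A) :
    A + interior P ⊆ interior A ∧
    A ⊆ closure (interior A) ∧
    ∀ O : Set G, IsOpen O → ∀ D : Set G, D ⊆ O → O ⊆ closure D →
      ((A ∩ O).Nonempty ↔ (A ∩ D).Nonempty) := by
  have h1 : A + interior P ⊆ interior A := by
    rintro _ ⟨a, ha, ω, hω, rfl⟩
    rw [mem_interior]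
    refine ⟨(a + ·) '' interior P, ?_, ?_, ⟨ω, hω, rfl⟩⟩
    · rintro _ ⟨p, hp, rfl⟩
      exact hAP a ha p (interior_subset hp)
    · exact (Homeomorph.addLeft a).isOpenMap _ isOpen_interior
  have h2 : A ⊆ closure (interior A) := by
    intro a ha
    have h0 : (0 : G) ∈ closure (interior P) := hPint hP0
    have h3 : a ∈ (a + ·) '' closure (interior P) := ⟨0, h0, by simp⟩
    have h4 := image_closure_subset_closure_image
      (f := (a + ·)) (s := interior P) (by continuity) h3
    refine closure_mono ?_ h4
    rintro _ ⟨p, hp, rfl⟩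
    exact h1 ⟨a, ha, p, hp, rfl⟩
  refine ⟨h1, h2, fun O hO D hDO hOD => ?_⟩
  constructor
  · rintro ⟨x, hxA, hxO⟩
    obtain ⟨y, hyO, hyA⟩ := mem_closure_iff.mp (h2 hxA) O hO hxO
    obtain ⟨z, hzA, hzD⟩ := mem_closure_iff.mp (hOD hyO) (interior A) isOpen_interior hyA
    exact ⟨z, interior_subset hzA, hzD⟩
  · rintro ⟨x, hxA, hxD⟩
    exact ⟨x, hxA, hDO hxD⟩
end
end

section
/- Let (U,V) be a weak Weyl pair on a separable complex Hilbert space H, and let (W,K) be a minimal unitary dilation of V: K contains H as a closed subspace, W = (W_x)_{x∈G} is a strongly continuous group of unitaries on K, W_a ξ = V_a ξ for all a ∈ P and ξ ∈ H, and ⋃_{a∈P} W_a* H is dense in K. Then for every χ ∈ Ĝ there exists a unique unitary operator Ũ_χ on K such that Ũ_χ ξ = U_χ ξ for all ξ ∈ H and Ũ_χ W_x = χ(x) W_x Ũ_χ for all x ∈ G; explicitly, Ũ_χ ξ = χ(a)⁻¹ W_a* U_χ W_a ξ for ξ ∈ W_a* H, a ∈ P, and this is well defined: for a, b ∈ P and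 ξ ∈ W_a* H ∩ W_b* H one has χ(a)⁻¹ W_a* U_χ W_a ξ = χ(b)⁻¹ W_b* U_χ W_b ξ. -/
noncomputable section

open scoped ComplexInnerProductSpace

/-- Let `(U,V)` be a weak Weyl pair on `H` and `(W,K)` a minimal unitary
dilation of `V` (via the isometric embedding `ι : H → K`).  Then for every character `χ`
there is a unique unitary `Ũ_χ` on `K` restricting to `U_χ` on `H` and satisfying
`Ũ_χ W_x = χ(x) W_x Ũ_χ` for all `x ∈ G`; it is given on `W_a* H` (`a ∈ P`) by
`Ũ_χ ξ = χ(a)⁻¹ W_a* U_χ W_a ξ`, and this formula is well defined. -/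
theorem extension_of_unitary_group_to_dilation
    {G : Type*} [AddCommGroup G] [TopologicalSpace G] [IsTopologicalAddGroup G]
    [LocallyCompactSpace G] [SecondCountableTopology G] [T2Space G]
    (P : Set G) (hPclosed : IsClosed P) (hP0 : (0 : G) ∈ P)
    (hPadd : ∀ a ∈ P, ∀ b ∈ P, a + b ∈ P)
    (hPgen : ∀ x : G, ∃ a ∈ P, ∃ b ∈ P, x = a - b)
    (hPint : P ⊆ closure (interior P))
    -- the weak Weyl pair `(U,V)` on `H`
    (H : Type*) [NormedAddCommGroup H] [InnerProductSpace ℂ H] [CompleteSpace H]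
    [SecondCountableTopology H]
    (U : PontryaginDual (Multiplicative G) → H →L[ℂ] H)
    (V : G → H →L[ℂ] H)
    (hU1 : U 1 = 1)
    (hUmul : ∀ χ₁ χ₂, U (χ₁ * χ₂) = U χ₁ ∘L U χ₂)
    (hUiso : ∀ χ ξ, ‖U χ ξ‖ = ‖ξ‖)
    (hUcont : ∀ ξ : H, Continuous fun χ => U χ ξ)
    (hV0 : V 0 = 1)
    (hVmul : ∀ a ∈ P, ∀ b ∈ P, V (a + b) = V a ∘L V b)
    (hViso : ∀ a ∈ P, ∀ ξ : H, ‖V a ξ‖ = ‖ξ‖)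
    (hVcont : ∀ ξ : H, ContinuousOn (fun a => V a ξ) P)
    (hWeyl : ∀ (χ : PontryaginDual (Multiplicative G)), ∀ a ∈ P,
      U χ ∘L V a = (χ (Multiplicative.ofAdd a) : ℂ) • (V a ∘L U χ))
    -- the minimal unitary dilation `(W, K)`, with `H ⊆ K` realised by the isometry `ι`
    (K : Type*) [NormedAddCommGroup K] [InnerProductSpace ℂ K] [CompleteSpace K]
    [SecondCountableTopology K]
    (ι : H →ₗᵢ[ℂ] K)
    (W : G → K →L[ℂ] K)
    (hW0 : W 0 = 1)
    (hWadd : ∀ x y, W (x + y) = W x ∘L W y)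
    (hWadj : ∀ x, ContinuousLinearMap.adjoint (W x) = W (-x))
    (hWcont : ∀ ξ : K, Continuous fun x => W x ξ)
    (hdil : ∀ a ∈ P, ∀ ξ : H, W a (ι ξ) = ι (V a ξ))
    (hmin : Dense (⋃ a ∈ P, ContinuousLinearMap.adjoint (W a) '' Set.range ι)) :
    ∀ χ : PontryaginDual (Multiplicative G),
      -- well-definedness of the formula `Ũ_χ (W_a* ξ) = χ(a)⁻¹ W_a* U_χ (W_a ξ)`
      (∀ a ∈ P, ∀ b ∈ P, ∀ ηa ηb : H,
        ContinuousLinearMap.adjoint (W a) (ι ηa) = ContinuousLinearMap.adjoint (W b) (ι ηb) →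
        (χ (Multiplicative.ofAdd a) : ℂ)⁻¹ •
            ContinuousLinearMap.adjoint (W a) (ι (U χ ηa)) =
        (χ (Multiplicative.ofAdd b) : ℂ)⁻¹ •
            ContinuousLinearMap.adjoint (W b) (ι (U χ ηb))) ∧
      -- existence and uniqueness of the unitary `Ũ_χ`
      (∃! Ut : K →L[ℂ] K,
        (Ut ∘L ContinuousLinearMap.adjoint Ut = 1 ∧
          ContinuousLinearMap.adjoint Ut ∘L Ut = 1) ∧
        (∀ ξ : H, Ut (ι ξ) = ι (U χ ξ)) ∧
        (∀ x : G, Ut ∘L W x = (χ (Multiplicative.ofAdd x) : ℂ) • (W x ∘L Ut))) ∧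
      -- the unitary `Ũ_χ` is given by the explicit formula
      (∀ Ut : K →L[ℂ] K,
        (Ut ∘L ContinuousLinearMap.adjoint Ut = 1 ∧
          ContinuousLinearMap.adjoint Ut ∘L Ut = 1) →
        (∀ ξ : H, Ut (ι ξ) = ι (U χ ξ)) →
        (∀ x : G, Ut ∘L W x = (χ (Multiplicative.ofAdd x) : ℂ) • (W x ∘L Ut)) →
        ∀ a ∈ P, ∀ η : H,
          Ut (ContinuousLinearMap.adjoint (W a) (ι η)) =
            (χ (Multiplicative.ofAdd a) : ℂ)⁻¹ •
              ContinuousLinearMap.adjoint (W a) (ι (U χ η))) := by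
  classical
  intro χ
  set c : G → ℂ := fun a => (χ (Multiplicative.ofAdd a) : ℂ) with hcdef
  have hcadd : ∀ a b : G, c (a + b) = c a * c b := by
    intro a b
    simp only [hcdef, ofAdd_add, map_mul, Circle.coe_mul]
  have hcne : ∀ a : G, c a ≠ 0 := fun a => Circle.coe_ne_zero _
  have hcnorm : ∀ a : G, ‖c a‖ = 1 := by
    intro a
    simp only [hcdef, Circle.norm_coe]
  have hc0 : c 0 = 1 := by
    simp only [hcdef, ofAdd_zero, map_one, Circle.coe_one]
  have hcneg : ∀ a : G, c (-a) = (c a)⁻¹ := by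
    intro a
    simp only [hcdef, ofAdd_neg, map_inv, Circle.coe_inv]
  -- basic facts about `W`
  have hWcomp : ∀ (x y : G) (ζ : K), W x (W y ζ) = W (x + y) ζ := by
    intro x y ζ; rw [hWadd]; rfl
  have hWinvl : ∀ (x : G) (ζ : K), W (-x) (W x ζ) = ζ := by
    intro x ζ
    rw [hWcomp, neg_add_cancel, hW0]; rfl
  have hWinj : ∀ x : G, Function.Injective (W x) := by
    intro x ζ₁ ζ₂ h
    have := congrArg (W (-x)) h
    rwa [hWinvl, hWinvl] at this
  have hWnorm : ∀ (x : G) (ζ : K), ‖W x ζ‖ = ‖ζ‖ := by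
    intro x ζ
    have h1 : ⟪W x ζ, W x ζ⟫ = ⟪ζ, ζ⟫ := by
      rw [← ContinuousLinearMap.adjoint_inner_left, hWadj, hWinvl]
    rw [norm_eq_sqrt_re_inner (𝕜 := ℂ), norm_eq_sqrt_re_inner (𝕜 := ℂ) ζ, h1]
  -- pointwise Weyl relation
  have hUVb : ∀ b ∈ P, ∀ η : H, U χ (V b η) = c b • V b (U χ η) := by
    intro b hb η
    have := congrArg (fun T : H →L[ℂ] H => T η) (hWeyl χ b hb)
    simpa using this
  have hVUb : ∀ b ∈ P, ∀ η : H, V b (U χ η) = (c b)⁻¹ • U χ (V b η) := by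
    intro b hb η
    rw [hUVb b hb η, smul_smul, inv_mul_cancel₀ (hcne b), one_smul]
  -- the shift identity
  have hshift : ∀ (a : G), ∀ b ∈ P, ∀ η : H,
      W (-a) (ι η) = W (-(a + b)) (ι (V b η)) := by
    intro a b hb η
    rw [← hdil b hb η, hWcomp]
    congr 1
    abel
  -- well-definedness (with `W (-a)` in place of `adjoint (W a)`)
  have hwd' : ∀ a ∈ P, ∀ b ∈ P, ∀ ηa ηb : H,
      W (-a) (ι ηa) = W (-b) (ι ηb) →
      (c a)⁻¹ • W (-a) (ι (U χ ηa)) = (c b)⁻¹ • W (-b) (ι (U χ ηb)) := by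
    intro a ha b hb ηa ηb h
    have e1 : a + b + -a = b := by abel
    have e2 : a + b + -b = a := by abel
    have h1 : V b ηa = V a ηb := by
      apply ι.injective
      have h2 := congrArg (W (a + b)) h
      rw [hWcomp, hWcomp, e1, e2, hdil b hb, hdil a ha] at h2
      exact h2
    apply hWinj (a + b)
    rw [map_smul, map_smul, hWcomp, hWcomp, e1, e2, hdil b hb, hdil a ha,
      hVUb b hb, hVUb a ha, h1, map_smul, map_smul, smul_smul, smul_smul, mul_comm]
  -- the dense set `S`
  set S : Set K := {ξ | ∃ a, a ∈ P ∧ ∃ η : H, W (-a) (ι η) = ξ} with hSdef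
  have hmemS : ∀ a ∈ P, ∀ η : H, W (-a) (ι η) ∈ S := fun a ha η => ⟨a, ha, η, rfl⟩
  have hSdense : Dense S := by
    simp only [hWadj] at hmin
    have hset : (⋃ a ∈ P, ⇑(W (-a)) '' Set.range ⇑ι) = S := by
      ext ξ
      simp only [hSdef, Set.mem_iUnion, Set.mem_image, Set.mem_range, Set.mem_setOf_eq]
      constructor
      · rintro ⟨a, ha, y, ⟨η, rfl⟩, h⟩; exact ⟨a, ha, η, h⟩
      · rintro ⟨a, ha, η, h⟩; exact ⟨a, ha, ι η, ⟨η, rfl⟩, h⟩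
    rwa [hset] at hmin
  -- the local definition of the extension on `S`
  have hrepr : ∀ ξ : K, ξ ∈ S → ∃ p : G × H, p.1 ∈ P ∧ W (-p.1) (ι p.2) = ξ := by
    rintro ξ ⟨a, ha, η, h⟩; exact ⟨(a, η), ha, h⟩
  set g : K → K := fun ξ =>
    if h : ξ ∈ S then
      (c ((hrepr ξ h).choose.1))⁻¹ • W (-(hrepr ξ h).choose.1) (ι (U χ (hrepr ξ h).choose.2))
    else 0 with hgdef
  have hg : ∀ a ∈ P, ∀ η : H, g (W (-a) (ι η)) = (c a)⁻¹ • W (-a) (ι (U χ η)) := by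
    intro a ha η
    have hm : W (-a) (ι η) ∈ S := hmemS a ha η
    have hsp := (hrepr _ hm).choose_spec
    simp only [hgdef, dif_pos hm]
    exact hwd' _ hsp.1 _ ha _ _ hsp.2
  -- algebraic properties of `g` on `S`
  have hgadd : ∀ ξ ∈ S, ∀ ζ ∈ S, (ξ + ζ) ∈ S ∧ g (ξ + ζ) = g ξ + g ζ := by
    rintro _ ⟨a, ha, η, rfl⟩ _ ⟨b, hb, μ, rfl⟩
    have hab := hPadd a ha b hb
    have h1 : W (-a) (ι η) = W (-(a + b)) (ι (V b η)) := hshift a b hb η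
    have h2 : W (-b) (ι μ) = W (-(a + b)) (ι (V a μ)) := by
      rw [hshift b a ha μ, add_comm b a]
    have hsum : W (-a) (ι η) + W (-b) (ι μ) = W (-(a + b)) (ι (V b η + V a μ)) := by
      rw [h1, h2, map_add, map_add]
    have t1 : g (W (-a) (ι η)) =
        ((c a)⁻¹ * (c b)⁻¹) • W (-(a + b)) (ι (U χ (V b η))) := by
      rw [hg a ha, hshift a b hb (U χ η), hVUb b hb η, map_smul, map_smul, smul_smul]
    have t2 : g (W (-b) (ι μ)) =
        ((c b)⁻¹ * (c a)⁻¹) • W (-(a + b)) (ι (U χ (V a μ))) := by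
      rw [hg b hb, hshift b a ha (U χ μ), add_comm b a, hVUb a ha μ,
        map_smul, map_smul, smul_smul]
    have t3 : g (W (-(a + b)) (ι (V b η + V a μ))) =
        ((c a)⁻¹ * (c b)⁻¹) •
          (W (-(a + b)) (ι (U χ (V b η))) + W (-(a + b)) (ι (U χ (V a μ)))) := by
      rw [hg _ hab, map_add (U χ), map_add ι, map_add (W (-(a + b))), hcadd, mul_inv]
    constructor
    · rw [hsum]; exact hmemS _ hab _
    · rw [hsum, t3, t1, t2, smul_add, mul_comm ((c b)⁻¹) ((c a)⁻¹)]
  have hgsmul : ∀ ξ ∈ S, ∀ r : ℂ, (r • ξ) ∈ S ∧ g (r • ξ) = r • g ξ := by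
    rintro _ ⟨a, ha, η, rfl⟩ r
    have h1 : r • W (-a) (ι η) = W (-a) (ι (r • η)) := by rw [map_smul, map_smul]
    constructor
    · rw [h1]; exact hmemS a ha _
    · rw [h1, hg a ha, hg a ha, map_smul (U χ), map_smul ι, map_smul (W (-a)), smul_comm]
  have hzeroS : (0 : K) ∈ S := ⟨0, hP0, 0, by simp⟩
  have hgnorm : ∀ ξ ∈ S, ‖g ξ‖ = ‖ξ‖ := by
    rintro _ ⟨a, ha, η, rfl⟩
    rw [hg a ha, norm_smul, norm_inv, hcnorm, hWnorm, hWnorm, ι.norm_map, ι.norm_map,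
      hUiso, inv_one, one_mul]
  -- the subspace and the continuous linear map on it
  set D : Submodule ℂ K :=
    { carrier := S
      add_mem' := fun h1 h2 => (hgadd _ h1 _ h2).1
      zero_mem' := hzeroS
      smul_mem' := fun r ξ h => (hgsmul ξ h r).1 } with hDdef
  set T : D →ₗ[ℂ] K :=
    { toFun := fun ξ => g ξ.1
      map_add' := fun ξ ζ => (hgadd _ ξ.2 _ ζ.2).2
      map_smul' := fun r ξ => (hgsmul _ ξ.2 r).2 } with hTdef
  have hTbound : ∀ ξ : D, ‖T ξ‖ ≤ 1 * ‖ξ‖ := by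
    intro ξ
    rw [one_mul]
    exact le_of_eq (hgnorm _ ξ.2)
  set Tc : D →L[ℂ] K := T.mkContinuous 1 hTbound with hTcdef
  set e : D →L[ℂ] K := D.subtypeL with hedef
  have hue : IsUniformInducing (⇑e) := isUniformEmbedding_subtype_val.isUniformInducing
  have hd : DenseRange (⇑e) := by
    have hre : Set.range (⇑e) = S := Subtype.range_val
    rw [DenseRange, hre]
    exact hSdense
  set Ut : K →L[ℂ] K := Tc.extend e with hUtdef
  have hUtS : ∀ ξ : K, ∀ hξ : ξ ∈ S, Ut ξ = g ξ := by
    intro ξ hξ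
    exact ContinuousLinearMap.extend_eq Tc hd hue ⟨ξ, hξ⟩
  have hUtnorm : ∀ ζ : K, ‖Ut ζ‖ = ‖ζ‖ := by
    have heq : (fun ζ : K => ‖Ut ζ‖) = fun ζ : K => ‖ζ‖ :=
      Continuous.ext_on hSdense Ut.continuous.norm continuous_norm
        (fun ξ hξ => by rw [hUtS ξ hξ, hgnorm ξ hξ])
    exact fun ζ => congrFun heq ζ
  have hinner : ∀ x y : K, ⟪Ut x, Ut y⟫ = ⟪x, y⟫ := fun x y =>
    LinearIsometry.inner_map_map ⟨Ut.toLinearMap, hUtnorm⟩ x y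
  have hadjUt : ContinuousLinearMap.adjoint Ut ∘L Ut = 1 := by
    ext ζ
    simp only [ContinuousLinearMap.coe_comp', Function.comp_apply,
      ContinuousLinearMap.one_apply]
    apply ext_inner_right ℂ
    intro v
    rw [ContinuousLinearMap.adjoint_inner_left, hinner]
  have hadjUt' : ∀ ζ : K, ContinuousLinearMap.adjoint Ut (Ut ζ) = ζ := by
    intro ζ
    have := congrArg (fun T : K →L[ℂ] K => T ζ) hadjUt
    simpa using this
  -- surjectivity
  have hUinv : ∀ η : H, U χ (U χ⁻¹ η) = η := by
    intro η
    have h := hUmul χ χ⁻¹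
    rw [mul_inv_cancel, hU1] at h
    have := congrArg (fun T : H →L[ℂ] H => T η) h
    simpa using this.symm
  have hSsub : S ⊆ Set.range Ut := by
    rintro _ ⟨a, ha, η, rfl⟩
    refine ⟨c a • W (-a) (ι (U χ⁻¹ η)), ?_⟩
    rw [map_smul, hUtS _ (hmemS a ha _), hg a ha, smul_smul,
      mul_inv_cancel₀ (hcne a), one_smul, hUinv]
  have hUtiso : Isometry (⇑Ut) := AddMonoidHomClass.isometry_of_norm Ut hUtnorm
  have hclosedrange : IsClosed (Set.range ⇑Ut) := hUtiso.isClosedEmbedding.isClosed_range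
  have hsurj : Function.Surjective (⇑Ut) := by
    intro ζ
    have h1 : closure S ⊆ Set.range ⇑Ut := hclosedrange.closure_subset_iff.mpr hSsub
    have h2 : ζ ∈ closure S := by rw [hSdense.closure_eq]; trivial
    exact h1 h2
  have hUtadj2 : Ut ∘L ContinuousLinearMap.adjoint Ut = 1 := by
    ext ζ
    obtain ⟨w, rfl⟩ := hsurj ζ
    simp only [ContinuousLinearMap.coe_comp', Function.comp_apply,
      ContinuousLinearMap.one_apply]
    rw [hadjUt' w]
  -- restriction to `H`
  have hUtι : ∀ ξ : H, Ut (ι ξ) = ι (U χ ξ) := by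
    intro ξ
    have h0 : ∀ μ : H, W (-(0 : G)) (ι μ) = ι μ := by
      intro μ; rw [neg_zero, hW0]; rfl
    have hm : ι ξ ∈ S := by rw [← h0 ξ]; exact hmemS 0 hP0 ξ
    rw [hUtS _ hm, ← h0 ξ, hg 0 hP0 ξ, hc0, inv_one, one_smul, h0]
  -- the intertwining relation
  have hUtW : ∀ x : G, Ut ∘L W x = c x • (W x ∘L Ut) := by
    intro x
    obtain ⟨b, hb, d, hd, hx⟩ := hPgen x
    apply ContinuousLinearMap.coeFn_injective
    apply Continuous.ext_on hSdense
    · exact Ut.continuous.comp (W x).continuous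
    · exact ((W x).continuous.comp Ut.continuous).const_smul (c x)
    rintro _ ⟨a, ha, η, rfl⟩
    simp only [ContinuousLinearMap.coe_comp', ContinuousLinearMap.coe_smul',
      Function.comp_apply, Pi.smul_apply]
    have had := hPadd a ha d hd
    have harg : x + -a = -(a + d) + b := by rw [hx]; abel
    have hcx : c x = c b * (c d)⁻¹ := by rw [hx, sub_eq_add_neg, hcadd, hcneg]
    calc Ut (W x (W (-a) (ι η)))
        = Ut (W (-(a + d)) (ι (V b η))) := by
          rw [hWcomp x (-a), harg, ← hWcomp (-(a + d)) b, hdil b hb]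
      _ = (c (a + d))⁻¹ • W (-(a + d)) (ι (U χ (V b η))) := by
          rw [hUtS _ (hmemS _ had _), hg _ had]
      _ = ((c (a + d))⁻¹ * c b) • W (-(a + d) + b) (ι (U χ η)) := by
          rw [hUVb b hb η, map_smul ι, map_smul (W (-(a + d))), smul_smul,
            ← hdil b hb, hWcomp]
      _ = (c x * (c a)⁻¹) • W (x + -a) (ι (U χ η)) := by
          rw [harg, hcx, hcadd, mul_inv]; ring_nf
      _ = c x • W x (Ut (W (-a) (ι η))) := by
          rw [hUtS _ (hmemS a ha η), hg a ha, map_smul (W x), hWcomp x (-a), smul_smul]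
  -- any operator with the two properties is given by the formula
  have hform : ∀ Ut' : K →L[ℂ] K, (∀ ξ : H, Ut' (ι ξ) = ι (U χ ξ)) →
      (∀ x : G, Ut' ∘L W x = c x • (W x ∘L Ut')) →
      ∀ a ∈ P, ∀ η : H,
        Ut' (W (-a) (ι η)) = (c a)⁻¹ • W (-a) (ι (U χ η)) := by
    intro Ut' hι' hW' a ha η
    have := congrArg (fun T : K →L[ℂ] K => T (ι η)) (hW' (-a))
    simp only [ContinuousLinearMap.coe_comp', ContinuousLinearMap.coe_smul',
      Function.comp_apply, Pi.smul_apply] at this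
    rw [this, hι' η, hcneg]
  refine ⟨?_, ?_, ?_⟩
  · -- well-definedness
    intro a ha b hb ηa ηb h
    simp only [hWadj] at h ⊢
    exact hwd' a ha b hb ηa ηb h
  · -- existence and uniqueness
    refine ⟨Ut, ⟨⟨hUtadj2, hadjUt⟩, hUtι, fun x => hUtW x⟩, ?_⟩
    rintro y ⟨-, hy2, hy3⟩
    apply ContinuousLinearMap.coeFn_injective
    apply Continuous.ext_on hSdense y.continuous Ut.continuous
    rintro _ ⟨a, ha, η, rfl⟩
    rw [hform y hy2 hy3 a ha η, hform Ut hUtι hUtW a ha η]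
  · -- the explicit formula
    intro Ut' _ h2 h3 a ha η
    simp only [hWadj]
    exact hform Ut' h2 h3 a ha η
end
end

section
/- Let (U,V) be a weak Weyl pair on H, let (W,K) be a minimal unitary dilation of V (K ⊇ H closed, W strongly continuous unitary group on K, W_a|_H = V_a for a ∈ P, ⋃_{a∈P} W_a* H dense in K), and for χ ∈ Ĝ let Ũ_χ be the unique unitary on K with Ũ_χ|_H = U_χ and Ũ_χ W_x = χ(x) W_x Ũ_χ for all x ∈ G. Then Ũ = (Ũ_χ)_{χ∈Ĝ} is a strongly continuous group of unitaries on K, and for every χ ∈ Ĝ and every x ∈ G, Ũ_χ commutes with the orthogonal projection E_x onto the subspace W_x H. -/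
noncomputable section

/-- With `(U,V)` a weak Weyl pair on `H`, `(W,K)` a minimal unitary dilation of
`V`, and `Ũ_χ` the unique unitary on `K` extending `U_χ` and satisfying
`Ũ_χ W_x = χ(x) W_x Ũ_χ`, the family `Ũ` is a strongly continuous group of unitaries on `K`,
and each `Ũ_χ` commutes with the orthogonal projection `E_x` onto `W_x H`, for every `x ∈ G`. -/
theorem extended_unitary_group_properties
    {G : Type*} [AddCommGroup G] [TopologicalSpace G] [IsTopologicalAddGroup G]
    [LocallyCompactSpace G] [SecondCountableTopology G] [T2Space G]
    (P : Set G) (hPclosed : IsClosed P) (hP0 : (0 : G) ∈ P)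
    (hPadd : ∀ a ∈ P, ∀ b ∈ P, a + b ∈ P)
    (hPgen : ∀ x : G, ∃ a ∈ P, ∃ b ∈ P, x = a - b)
    (hPint : P ⊆ closure (interior P))
    -- the weak Weyl pair `(U,V)` on `H`
    (H : Type*) [NormedAddCommGroup H] [InnerProductSpace ℂ H] [CompleteSpace H]
    [SecondCountableTopology H]
    (U : PontryaginDual (Multiplicative G) → H →L[ℂ] H)
    (V : G → H →L[ℂ] H)
    (hU1 : U 1 = 1)
    (hUmul : ∀ χ₁ χ₂, U (χ₁ * χ₂) = U χ₁ ∘L U χ₂)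
    (hUiso : ∀ χ ξ, ‖U χ ξ‖ = ‖ξ‖)
    (hUcont : ∀ ξ : H, Continuous fun χ => U χ ξ)
    (hV0 : V 0 = 1)
    (hVmul : ∀ a ∈ P, ∀ b ∈ P, V (a + b) = V a ∘L V b)
    (hViso : ∀ a ∈ P, ∀ ξ : H, ‖V a ξ‖ = ‖ξ‖)
    (hVcont : ∀ ξ : H, ContinuousOn (fun a => V a ξ) P)
    (hWeyl : ∀ (χ : PontryaginDual (Multiplicative G)), ∀ a ∈ P,
      U χ ∘L V a = (χ (Multiplicative.ofAdd a) : ℂ) • (V a ∘L U χ))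
    -- the minimal unitary dilation `(W, K)` of `V`
    (K : Type*) [NormedAddCommGroup K] [InnerProductSpace ℂ K] [CompleteSpace K]
    [SecondCountableTopology K]
    (ι : H →ₗᵢ[ℂ] K)
    (W : G → K →L[ℂ] K)
    (hW0 : W 0 = 1)
    (hWadd : ∀ x y, W (x + y) = W x ∘L W y)
    (hWadj : ∀ x, ContinuousLinearMap.adjoint (W x) = W (-x))
    (hWcont : ∀ ξ : K, Continuous fun x => W x ξ)
    (hdil : ∀ a ∈ P, ∀ ξ : H, W a (ι ξ) = ι (V a ξ))
    (hmin : Dense (⋃ a ∈ P, ContinuousLinearMap.adjoint (W a) '' Set.range ι))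
    -- `Ũ_χ` is the unique unitary on `K` with `Ũ_χ|_H = U_χ` and `Ũ_χ W_x = χ(x) W_x Ũ_χ`
    (Ut : PontryaginDual (Multiplicative G) → K →L[ℂ] K)
    (hUt_unitary : ∀ χ, Ut χ ∘L ContinuousLinearMap.adjoint (Ut χ) = 1 ∧
      ContinuousLinearMap.adjoint (Ut χ) ∘L Ut χ = 1)
    (hUt_res : ∀ χ, ∀ ξ : H, Ut χ (ι ξ) = ι (U χ ξ))
    (hUt_comm : ∀ (χ : PontryaginDual (Multiplicative G)) (x : G),
      Ut χ ∘L W x = (χ (Multiplicative.ofAdd x) : ℂ) • (W x ∘L Ut χ))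
    -- `E x` is the orthogonal projection onto `W x H`
    (E : G → K →L[ℂ] K)
    (hEmem : ∀ (x : G) (ξ : K), E x ξ ∈ W x '' (Set.range ι))
    (hEfix : ∀ x : G, ∀ ξ ∈ W x '' (Set.range ι), E x ξ = ξ)
    (hEsa : ∀ x : G, IsSelfAdjoint (E x)) :
    Ut 1 = 1 ∧
    (∀ χ₁ χ₂, Ut (χ₁ * χ₂) = Ut χ₁ ∘L Ut χ₂) ∧
    (∀ χ, ContinuousLinearMap.adjoint (Ut χ) = Ut χ⁻¹) ∧
    (∀ ξ : K, Continuous fun χ => Ut χ ξ) ∧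
    (∀ (χ : PontryaginDual (Multiplicative G)) (x : G),
      Ut χ ∘L E x = E x ∘L Ut χ) := by

  classical
  haveI : ContinuousEvalConst (PontryaginDual (Multiplicative G)) (Multiplicative G) Circle :=
    ContinuousMonoidHom.instContinuousEvalConst _ _
  have honeapp : ∀ y : Multiplicative G,
      (1 : PontryaginDual (Multiplicative G)) y = 1 := fun _ => rfl
  have hmulapp : ∀ (χ₁ χ₂ : PontryaginDual (Multiplicative G)) (y : Multiplicative G),
      (χ₁ * χ₂) y = χ₁ y * χ₂ y := fun _ _ _ => rfl
  -- abbreviation for the scalar character value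
  -- key formula: `Ut χ` on the dense generating set
  have hkey : ∀ (χ : PontryaginDual (Multiplicative G)) (a : G) (ξ : H),
      Ut χ ((ContinuousLinearMap.adjoint (W a)) (ι ξ)) =
        (χ (Multiplicative.ofAdd (-a)) : ℂ) •
          (ContinuousLinearMap.adjoint (W a)) (ι (U χ ξ)) := by
    intro χ a ξ
    rw [hWadj]
    have h := congrArg (fun T : K →L[ℂ] K => T (ι ξ)) (hUt_comm χ (-a))
    simpa [hUt_res] using h
  -- extensionality on the dense set
  have hext : ∀ (A B : K →L[ℂ] K),
      (∀ a ∈ P, ∀ ξ : H,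
        A ((ContinuousLinearMap.adjoint (W a)) (ι ξ)) =
        B ((ContinuousLinearMap.adjoint (W a)) (ι ξ))) → A = B := by
    intro A B h
    have heq : (A : K → K) = B := by
      refine Continuous.ext_on hmin A.continuous B.continuous ?_
      rintro ζ hζ
      simp only [Set.mem_iUnion, Set.mem_image, Set.mem_range] at hζ
      obtain ⟨a, ha, _, ⟨ξ, rfl⟩, rfl⟩ := hζ
      exact h a ha ξ
    exact ContinuousLinearMap.ext fun ζ => congrFun heq ζ
  -- part 1
  have h1 : Ut 1 = 1 := by
    apply hext
    intro a ha ξ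
    rw [hkey]
    simp [hU1, honeapp]
  -- part 2
  have h2 : ∀ χ₁ χ₂, Ut (χ₁ * χ₂) = Ut χ₁ ∘L Ut χ₂ := by
    intro χ₁ χ₂
    apply hext
    intro a ha ξ
    rw [ContinuousLinearMap.comp_apply, hkey, hkey, map_smul, hkey, hUmul, smul_smul]
    simp only [ContinuousLinearMap.comp_apply]
    congr 1
    rw [hmulapp, Circle.coe_mul, mul_comm]
  -- part 3
  have h3 : ∀ χ, ContinuousLinearMap.adjoint (Ut χ) = Ut χ⁻¹ := by
    intro χ
    have hinv : Ut χ ∘L Ut χ⁻¹ = 1 := by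
      rw [← h2, mul_inv_cancel, h1]
    ext ζ
    have e1 : Ut χ (Ut χ⁻¹ ζ) = ζ := by
      have := congrArg (fun T : K →L[ℂ] K => T ζ) hinv
      simpa using this
    have e2 := congrArg (fun T : K →L[ℂ] K => T (Ut χ⁻¹ ζ)) (hUt_unitary χ).2
    simp only [ContinuousLinearMap.comp_apply, ContinuousLinearMap.one_apply] at e2
    calc ContinuousLinearMap.adjoint (Ut χ) ζ
        = ContinuousLinearMap.adjoint (Ut χ) (Ut χ (Ut χ⁻¹ ζ)) := by rw [e1]
      _ = Ut χ⁻¹ ζ := e2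
  -- inner ℂ products are preserved
  have hinner : ∀ χ (a b : K), inner ℂ (Ut χ a) (Ut χ b) = (inner ℂ a b : ℂ) := by
    intro χ a b
    have h := congrArg (fun T : K →L[ℂ] K => T a) (hUt_unitary χ).2
    simp only [ContinuousLinearMap.comp_apply, ContinuousLinearMap.one_apply] at h
    calc (inner ℂ (Ut χ a) (Ut χ b) : ℂ)
        = inner ℂ (ContinuousLinearMap.adjoint (Ut χ) (Ut χ a)) b := by
          rw [ContinuousLinearMap.adjoint_inner_left]
      _ = inner ℂ a b := by rw [h]
  have hnorm : ∀ χ (ζ : K), ‖Ut χ ζ‖ = ‖ζ‖ := by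
    intro χ ζ
    rw [@norm_eq_sqrt_re_inner ℂ, @norm_eq_sqrt_re_inner ℂ K, hinner]
  -- part 4 : strong continuity
  have h4 : ∀ ζ : K, Continuous fun χ => Ut χ ζ := by
    intro ζ
    rw [continuous_iff_continuousAt]
    intro χ₀
    rw [ContinuousAt, Metric.tendsto_nhds]
    intro ε hε
    obtain ⟨η, hη, hηs⟩ : ∃ η ∈ Metric.ball ζ (ε / 4),
        η ∈ ⋃ a ∈ P, ContinuousLinearMap.adjoint (W a) '' Set.range ι := by
      have := hmin.exists_mem_open
        (Metric.isOpen_ball : IsOpen (Metric.ball ζ (ε / 4)))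
        ⟨ζ, Metric.mem_ball_self (by linarith)⟩
      obtain ⟨η, hη1, hη2⟩ := this
      exact ⟨η, hη2, hη1⟩
    simp only [Set.mem_iUnion, Set.mem_image, Set.mem_range] at hηs
    obtain ⟨a, ha, _, ⟨ξ, rfl⟩, rfl⟩ := hηs
    set η := (ContinuousLinearMap.adjoint (W a)) (ι ξ) with hηdef
    -- continuity of `χ ↦ Ut χ η`
    have hcont : Continuous fun χ => Ut χ η := by
      have : (fun χ => Ut χ η) = fun χ =>
          (χ (Multiplicative.ofAdd (-a)) : ℂ) •
            (ContinuousLinearMap.adjoint (W a)) (ι (U χ ξ)) := by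
        funext χ; exact hkey χ a ξ
      rw [this]
      refine Continuous.smul ?_ ?_
      · exact continuous_subtype_val.comp (continuous_eval_const (Multiplicative.ofAdd (-a)))
      · exact (ContinuousLinearMap.adjoint (W a)).continuous.comp
          (ι.continuous.comp (hUcont ξ))
    have hev : ∀ᶠ χ in nhds χ₀, dist (Ut χ η) (Ut χ₀ η) < ε / 4 := by
      have := hcont.continuousAt (x := χ₀)
      rw [ContinuousAt, Metric.tendsto_nhds] at this
      exact this (ε / 4) (by linarith)
    filter_upwards [hev] with χ hχ
    have hd1 : dist (Ut χ ζ) (Ut χ η) = dist ζ η := by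
      rw [dist_eq_norm, dist_eq_norm, ← map_sub, hnorm]
    have hd3 : dist (Ut χ₀ η) (Ut χ₀ ζ) = dist η ζ := by
      rw [dist_eq_norm, dist_eq_norm, ← map_sub, hnorm]
    have hζη : dist ζ η < ε / 4 := Metric.mem_ball'.mp hη
    calc dist (Ut χ ζ) (Ut χ₀ ζ)
        ≤ dist (Ut χ ζ) (Ut χ η) + dist (Ut χ η) (Ut χ₀ η) + dist (Ut χ₀ η) (Ut χ₀ ζ) :=
          dist_triangle4 _ _ _ _
      _ < ε / 4 + ε / 4 + ε / 4 := by
          rw [hd1, hd3, dist_comm η ζ]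
          exact add_lt_add (add_lt_add hζη hχ) hζη
      _ < ε := by linarith
  -- part 5 : commutation with the projections
  have h5 : ∀ (χ : PontryaginDual (Multiplicative G)) (x : G),
      Ut χ ∘L E x = E x ∘L Ut χ := by
    intro χ x
    set M : Set K := W x '' Set.range ι with hMdef
    -- M is a "submodule" set
    have hM_sub : ∀ m₁ ∈ M, ∀ m₂ ∈ M, m₁ - m₂ ∈ M := by
      rintro _ ⟨_, ⟨ξ₁, rfl⟩, rfl⟩ _ ⟨_, ⟨ξ₂, rfl⟩, rfl⟩
      exact ⟨ι (ξ₁ - ξ₂), ⟨ξ₁ - ξ₂, rfl⟩, by rw [map_sub, map_sub]⟩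
    -- Ut χ maps M into M
    have hUtM : ∀ χ' : PontryaginDual (Multiplicative G), ∀ m ∈ M, Ut χ' m ∈ M := by
      rintro χ' _ ⟨_, ⟨ξ, rfl⟩, rfl⟩
      have h := congrArg (fun T : K →L[ℂ] K => T (ι ξ)) (hUt_comm χ' x)
      simp only [ContinuousLinearMap.comp_apply, ContinuousLinearMap.smul_apply] at h
      rw [h, hUt_res]
      refine ⟨ι ((χ' (Multiplicative.ofAdd x) : ℂ) • U χ' ξ), ⟨_, rfl⟩, ?_⟩
      rw [map_smul, map_smul]
    -- Ut χ maps M onto M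
    have hUtM_surj : ∀ m ∈ M, ∃ m' ∈ M, Ut χ m' = m := by
      rintro _ ⟨_, ⟨ξ, rfl⟩, rfl⟩
      refine ⟨Ut χ⁻¹ (W x (ι ξ)), hUtM χ⁻¹ _ ⟨_, ⟨ξ, rfl⟩, rfl⟩, ?_⟩
      have := congrArg (fun T : K →L[ℂ] K => T (W x (ι ξ))) (h2 χ χ⁻¹)
      simp only [ContinuousLinearMap.comp_apply] at this
      rw [← this, mul_inv_cancel, h1, ContinuousLinearMap.one_apply]
    -- orthogonality of `ζ - E x ζ` to M
    have hperp : ∀ (ζ : K), ∀ m ∈ M, (inner ℂ (ζ - E x ζ) m : ℂ) = 0 := by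
      intro ζ m hm
      have hsa : ContinuousLinearMap.adjoint (E x) = E x := (hEsa x)
      have hEeq : (inner ℂ (E x ζ) m : ℂ) = inner ℂ ζ m := by
        calc (inner ℂ (E x ζ) m : ℂ)
            = inner ℂ (ContinuousLinearMap.adjoint (E x) ζ) m := by rw [hsa]
          _ = inner ℂ ζ (E x m) := ContinuousLinearMap.adjoint_inner_left _ _ _
          _ = inner ℂ ζ m := by rw [hEfix x m hm]
      rw [inner_sub_left, hEeq, sub_self]
    ext ζ
    simp only [ContinuousLinearMap.comp_apply]
    -- d := Ut χ (E x ζ) - E x (Ut χ ζ) is in M and orthogonal to M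
    have hd_mem : Ut χ (E x ζ) - E x (Ut χ ζ) ∈ M :=
      hM_sub _ (hUtM χ _ (hEmem x ζ)) _ (hEmem x (Ut χ ζ))
    have hd_perp : ∀ m ∈ M, (inner ℂ (Ut χ (E x ζ) - E x (Ut χ ζ)) m : ℂ) = 0 := by
      intro m hm
      obtain ⟨m', hm', rfl⟩ := hUtM_surj m hm
      rw [inner_sub_left]
      have e1 : (inner ℂ (Ut χ (E x ζ)) (Ut χ m') : ℂ) = inner ℂ ζ m' := by
        rw [hinner]
        have := hperp ζ m' hm'
        rw [inner_sub_left, sub_eq_zero] at this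
        exact this.symm
      have e2 : (inner ℂ (E x (Ut χ ζ)) (Ut χ m') : ℂ) = inner ℂ ζ m' := by
        have := hperp (Ut χ ζ) (Ut χ m') (hUtM χ m' hm')
        rw [inner_sub_left, sub_eq_zero] at this
        rw [← this, hinner]
      rw [e1, e2, sub_self]
    have : Ut χ (E x ζ) - E x (Ut χ ζ) = 0 := by
      have := hd_perp _ hd_mem
      exact inner_self_eq_zero.mp this
    exact sub_eq_zero.mp this
  exact ⟨h1, h2, h3, h4, h5⟩
end
end

section
/- With K, (P_m), (Q_n), F, z₀ and E as in the context: the map E : ℝ₊² → P(K) is increasing, i.e., for every (s,t) ∈ ℝ₊² and every (s₀,t₀) ∈ ℝ₊², E_{(s,t)} ≤ E_{(s+s₀, t+t₀)} (as projections: the range of E_{(s,t)} is contained in the range of E_{(s+s₀,t+t₀)}). -/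
open MeasureTheory

noncomputable section

/-- The increasing family `F : ℤ² → P(K)` built from the mutually orthogonal projections
`(P_m)_{m ≥ 1}` and `(Q_n)_{n ≥ 1}`. -/
def Fproj {K : Type*} [NormedAddCommGroup K] [InnerProductSpace ℂ K] [CompleteSpace K]
    (Pm Qn : ℕ → K →L[ℂ] K) : ℤ × ℤ → K →L[ℂ] K := fun q =>
  if 1 ≤ q.1 ∧ q.2 = 0 then ∑ k ∈ Finset.Icc 1 q.1.toNat, Pm k
  else if q.1 = 0 ∧ 1 ≤ q.2 then ∑ k ∈ Finset.Icc 1 q.2.toNat, Qn k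
  else if 1 ≤ q.1 ∧ 1 ≤ q.2 then 1
  else 0

/-- The projection-valued map `E : ℝ₊² → P(K)` of the construction (extended by `0` off
`ℝ₊²`), where `e S = 1_S(z₀)` denotes the value of the fixed character `z₀` of
`L^∞([0,1]², λ)` on the indicator of `S`. -/
def Eproj {K : Type*} [NormedAddCommGroup K] [InnerProductSpace ℂ K] [CompleteSpace K]
    (Pm Qn : ℕ → K →L[ℂ] K) (e : Set (ℝ × ℝ) → ℂ) : ℝ × ℝ → K →L[ℂ] K := fun q =>
  if 0 ≤ q.1 ∧ 0 ≤ q.2 then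
    e (Set.Icc 0 ((⌊q.1⌋ : ℝ) + 1 - q.1) ×ˢ Set.Icc 0 ((⌊q.2⌋ : ℝ) + 1 - q.2)) •
        Fproj Pm Qn (⌊q.1⌋, ⌊q.2⌋) +
    e (Set.Icc 0 ((⌊q.1⌋ : ℝ) + 1 - q.1) ×ˢ Set.Icc ((⌊q.2⌋ : ℝ) + 1 - q.2) 1) •
        Fproj Pm Qn (⌊q.1⌋, ⌊q.2⌋ + 1) +
    e (Set.Icc ((⌊q.1⌋ : ℝ) + 1 - q.1) 1 ×ˢ Set.Icc 0 ((⌊q.2⌋ : ℝ) + 1 - q.2)) •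
        Fproj Pm Qn (⌊q.1⌋ + 1, ⌊q.2⌋) +
    e (Set.Icc ((⌊q.1⌋ : ℝ) + 1 - q.1) 1 ×ˢ Set.Icc ((⌊q.2⌋ : ℝ) + 1 - q.2) 1) •
        Fproj Pm Qn (⌊q.1⌋ + 1, ⌊q.2⌋ + 1)
  else 0

/-!
Since `z₀` is multiplicative, its value on a rectangle is the product of its values on the
vertical and the horizontal strip through it, and two complementary strips meet in a null line,
so their values add up to `1`. Hence `E_{(s,t)} = F_{(p,q)}`, where `p` is `⌊s⌋` or `⌊s⌋ + 1`
according as `z₀` takes the value `1` on the strip `[0, ⌊s⌋ + 1 - s] × [0,1]` or not, and likewise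
for `q`. These strips shrink as `s` grows between consecutive integers, so `p` and `q` are
monotone, and `F` is increasing by the orthogonality of the `P_k` and of the `Q_k`.
-/

open Set

theorem Finset.sum_Icc_mul_sum_Icc_of_le {R : Type*} [Semiring R] {P : ℕ → R}
    (hP : ∀ i j, 1 ≤ i → 1 ≤ j → P i * P j = if i = j then P i else 0)
    {M M' : ℕ} (h : M ≤ M') :
    (∑ k ∈ Finset.Icc 1 M', P k) * ∑ j ∈ Finset.Icc 1 M, P j = ∑ j ∈ Finset.Icc 1 M, P j := by
  rw [Finset.mul_sum]
  refine Finset.sum_congr rfl fun j hj => ?_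
  rw [Finset.mem_Icc] at hj
  rw [Finset.sum_mul, Finset.sum_eq_single_of_mem j (by simp; omega), hP j j hj.1 hj.1, if_pos rfl]
  intro k hk hkj
  rw [hP k j (Finset.mem_Icc.mp hk).1 hj.1, if_neg hkj]

section Fproj

variable {K : Type*} [NormedAddCommGroup K] [InnerProductSpace ℂ K] [CompleteSpace K]
  (Pm Qn : ℕ → K →L[ℂ] K)

theorem Fproj_zero_zero : Fproj Pm Qn (0, 0) = 0 := by
  simp [Fproj]

theorem Fproj_pos_zero {m : ℤ} (hm : 1 ≤ m) :
    Fproj Pm Qn (m, 0) = ∑ k ∈ Finset.Icc 1 m.toNat, Pm k := by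
  simp [Fproj, hm]

theorem Fproj_zero_pos {n : ℤ} (hn : 1 ≤ n) :
    Fproj Pm Qn (0, n) = ∑ k ∈ Finset.Icc 1 n.toNat, Qn k := by
  simp [Fproj, hn]

theorem Fproj_pos_pos {m n : ℤ} (hm : 1 ≤ m) (hn : 1 ≤ n) : Fproj Pm Qn (m, n) = 1 := by
  have hm0 : m ≠ 0 := by omega
  have hn0 : n ≠ 0 := by omega
  simp [Fproj, hm, hn, hm0, hn0]

variable {Pm Qn}

theorem Fproj_comp_of_le
    (hPP : ∀ i j, 1 ≤ i → 1 ≤ j → Pm i ∘L Pm j = if i = j then Pm i else 0)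
    (hQQ : ∀ i j, 1 ≤ i → 1 ≤ j → Qn i ∘L Qn j = if i = j then Qn i else 0)
    {m n m' n' : ℤ} (hm : 0 ≤ m) (hn : 0 ≤ n) (hmm' : m ≤ m') (hnn' : n ≤ n') :
    Fproj Pm Qn (m', n') ∘L Fproj Pm Qn (m, n) = Fproj Pm Qn (m, n) := by
  obtain rfl | hm1 := (by omega : m = 0 ∨ 1 ≤ m) <;> obtain rfl | hn1 := (by omega : n = 0 ∨ 1 ≤ n)
  · rw [Fproj_zero_zero, ContinuousLinearMap.comp_zero]
  · obtain rfl | hm'1 := (by omega : m' = 0 ∨ 1 ≤ m')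
    · rw [Fproj_zero_pos Pm Qn hn1, Fproj_zero_pos Pm Qn (hn1.trans hnn')]
      exact Finset.sum_Icc_mul_sum_Icc_of_le hQQ (by omega)
    · rw [Fproj_pos_pos Pm Qn hm'1 (hn1.trans hnn')]
      exact one_mul _
  · obtain rfl | hn'1 := (by omega : n' = 0 ∨ 1 ≤ n')
    · rw [Fproj_pos_zero Pm Qn hm1, Fproj_pos_zero Pm Qn (hm1.trans hmm')]
      exact Finset.sum_Icc_mul_sum_Icc_of_le hPP (by omega)
    · rw [Fproj_pos_pos Pm Qn (hm1.trans hmm') hn'1]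
      exact one_mul _
  · rw [Fproj_pos_pos Pm Qn (hm1.trans hmm') (hn1.trans hnn')]
    exact one_mul _

end Fproj

def stepIndex (g : ℝ → ℂ) (s : ℝ) : ℤ :=
  if g (⌊s⌋ + 1 - s) = 1 then ⌊s⌋ else ⌊s⌋ + 1

theorem stepIndex_nonneg (g : ℝ → ℂ) {s : ℝ} (hs : 0 ≤ s) : 0 ≤ stepIndex g s := by
  have := Int.floor_nonneg.mpr hs
  unfold stepIndex; split_ifs <;> omega

theorem monotone_stepIndex {g : ℝ → ℂ} (hg : ∀ u v, u ≤ v → g u = 1 → g v = 1) :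
    Monotone (stepIndex g) := by
  intro s s' hss'
  obtain hlt | heq := (Int.floor_le_floor hss').lt_or_eq
  · unfold stepIndex; split_ifs <;> omega
  · have hwidth : (⌊s'⌋ : ℝ) + 1 - s' ≤ ⌊s⌋ + 1 - s := by rw [← heq]; linarith
    unfold stepIndex
    split_ifs with h h' h' <;> first | omega | exact absurd (hg _ _ hwidth h') h

theorem floor_add_one_sub_mem_Icc (s : ℝ) : (⌊s⌋ : ℝ) + 1 - s ∈ Icc (0 : ℝ) 1 := by
  constructor <;> linarith [Int.floor_le s, Int.lt_floor_add_one s]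

theorem volume_singleton_prod (u : ℝ) (B : Set ℝ) : volume ({u} ×ˢ B) = 0 := by
  rw [Measure.volume_eq_prod, Measure.prod_prod, Real.volume_singleton, zero_mul]

theorem volume_prod_singleton (A : Set ℝ) (v : ℝ) : volume (A ×ˢ {v}) = 0 := by
  rw [Measure.volume_eq_prod, Measure.prod_prod, Real.volume_singleton, mul_zero]

/-- The properties of `S ↦ 1_S(z₀) = z₀([1_S])` for a character `z₀` of `L^∞([0,1]², λ)`. -/
structure IsSquareCharacter (e : Set (ℝ × ℝ) → ℂ) : Prop where
  eq_zero_or_eq_one : ∀ S, e S = 0 ∨ e S = 1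
  univ : e univ = 1
  inter : ∀ S T, MeasurableSet S → MeasurableSet T → e (S ∩ T) = e S * e T
  union : ∀ S T, MeasurableSet S → MeasurableSet T →
    (volume.restrict (Icc (0 : ℝ) 1 ×ˢ Icc (0 : ℝ) 1)) (S ∩ T) = 0 → e (S ∪ T) = e S + e T
  null : ∀ S, MeasurableSet S → (volume.restrict (Icc (0 : ℝ) 1 ×ˢ Icc (0 : ℝ) 1)) S = 0 →
    e S = 0

namespace IsSquareCharacter

variable {e : Set (ℝ × ℝ) → ℂ}

theorem eq_one_of_subset (he : IsSquareCharacter e) {S T : Set (ℝ × ℝ)} (hS : MeasurableSet S)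
    (hT : MeasurableSet T) (hTS : T ⊆ S) (hT1 : e T = 1) : e S = 1 := by
  simpa [inter_eq_self_of_subset_right hTS, hT1] using (he.inter S T hS hT).symm

theorem prod_eq_mul (he : IsSquareCharacter e) {A B : Set ℝ} (hA : MeasurableSet A)
    (hB : MeasurableSet B) (hA1 : A ⊆ Icc 0 1) (hB1 : B ⊆ Icc 0 1) :
    e (A ×ˢ B) = e (A ×ˢ Icc 0 1) * e (Icc 0 1 ×ˢ B) := by
  rw [← he.inter _ _ (hA.prod measurableSet_Icc) (measurableSet_Icc.prod hB), prod_inter_prod,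
    inter_eq_left.mpr hA1, inter_eq_right.mpr hB1]

theorem square_eq_one (he : IsSquareCharacter e) : e (Icc (0 : ℝ) 1 ×ˢ Icc (0 : ℝ) 1) = 1 := by
  have hsq : MeasurableSet (Icc (0 : ℝ) 1 ×ˢ Icc (0 : ℝ) 1) :=
    measurableSet_Icc.prod measurableSet_Icc
  have hcompl : e (Icc (0 : ℝ) 1 ×ˢ Icc (0 : ℝ) 1)ᶜ = 0 :=
    he.null _ hsq.compl (by rw [Measure.restrict_apply hsq.compl]; simp)
  have h := he.union _ _ hsq hsq.compl (by simp)
  rwa [union_compl_self, he.univ, hcompl, add_zero, eq_comm] at h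

theorem add_eq_one_of_union_eq_square (he : IsSquareCharacter e) {A B : Set (ℝ × ℝ)}
    (hA : MeasurableSet A) (hB : MeasurableSet B) (hAB : A ∪ B = Icc 0 1 ×ˢ Icc 0 1)
    (hnull : volume (A ∩ B) = 0) : e A + e B = 1 := by
  rw [← he.union A B hA hB (nonpos_iff_eq_zero.mp (hnull ▸ Measure.restrict_apply_le _ _)), hAB,
    he.square_eq_one]

theorem left_strip_add_right_strip (he : IsSquareCharacter e) {u : ℝ} (hu : u ∈ Icc (0 : ℝ) 1) :
    e (Icc 0 u ×ˢ Icc 0 1) + e (Icc u 1 ×ˢ Icc 0 1) = 1 :=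
  he.add_eq_one_of_union_eq_square (measurableSet_Icc.prod measurableSet_Icc)
    (measurableSet_Icc.prod measurableSet_Icc)
    (by rw [← union_prod, Icc_union_Icc_eq_Icc hu.1 hu.2])
    (by rw [prod_inter_prod, Icc_inter_Icc_eq_singleton hu.1 hu.2, volume_singleton_prod])

theorem lower_strip_add_upper_strip (he : IsSquareCharacter e) {v : ℝ} (hv : v ∈ Icc (0 : ℝ) 1) :
    e (Icc 0 1 ×ˢ Icc 0 v) + e (Icc 0 1 ×ˢ Icc v 1) = 1 :=
  he.add_eq_one_of_union_eq_square (measurableSet_Icc.prod measurableSet_Icc)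
    (measurableSet_Icc.prod measurableSet_Icc)
    (by rw [← prod_union, Icc_union_Icc_eq_Icc hv.1 hv.2])
    (by rw [prod_inter_prod, Icc_inter_Icc_eq_singleton hv.1 hv.2, volume_prod_singleton])

theorem monotone_stepIndex_left_strip (he : IsSquareCharacter e) :
    Monotone (stepIndex fun u ↦ e (Icc 0 u ×ˢ Icc 0 1)) :=
  monotone_stepIndex fun _ _ huv ↦ he.eq_one_of_subset (measurableSet_Icc.prod measurableSet_Icc)
    (measurableSet_Icc.prod measurableSet_Icc) (prod_mono (Icc_subset_Icc_right huv) subset_rfl)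

theorem monotone_stepIndex_lower_strip (he : IsSquareCharacter e) :
    Monotone (stepIndex fun v ↦ e (Icc 0 1 ×ˢ Icc 0 v)) :=
  monotone_stepIndex fun _ _ huv ↦ he.eq_one_of_subset (measurableSet_Icc.prod measurableSet_Icc)
    (measurableSet_Icc.prod measurableSet_Icc) (prod_mono subset_rfl (Icc_subset_Icc_right huv))

theorem Eproj_eq_Fproj_stepIndex (he : IsSquareCharacter e) {K : Type*} [NormedAddCommGroup K]
    [InnerProductSpace ℂ K] [CompleteSpace K] (Pm Qn : ℕ → K →L[ℂ] K) {s t : ℝ} (hs : 0 ≤ s)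
    (ht : 0 ≤ t) :
    Eproj Pm Qn e (s, t) = Fproj Pm Qn (stepIndex (fun u ↦ e (Icc 0 u ×ˢ Icc 0 1)) s,
      stepIndex (fun v ↦ e (Icc 0 1 ×ˢ Icc 0 v)) t) := by
  have hu := floor_add_one_sub_mem_Icc s
  have hv := floor_add_one_sub_mem_Icc t
  have hxsum := he.left_strip_add_right_strip hu
  have hysum := he.lower_strip_add_upper_strip hv
  simp only [Eproj, stepIndex, if_pos (show 0 ≤ (s, t).1 ∧ 0 ≤ (s, t).2 from ⟨hs, ht⟩)]
  have hsub0 {w : ℝ} (hw : w ∈ Icc (0 : ℝ) 1) : Icc 0 w ⊆ Icc 0 1 := Icc_subset_Icc le_rfl hw.2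
  have hsub1 {w : ℝ} (hw : w ∈ Icc (0 : ℝ) 1) : Icc w 1 ⊆ Icc 0 1 := Icc_subset_Icc hw.1 le_rfl
  rw [he.prod_eq_mul measurableSet_Icc measurableSet_Icc (hsub0 hu) (hsub0 hv),
    he.prod_eq_mul measurableSet_Icc measurableSet_Icc (hsub0 hu) (hsub1 hv),
    he.prod_eq_mul measurableSet_Icc measurableSet_Icc (hsub1 hu) (hsub0 hv),
    he.prod_eq_mul measurableSet_Icc measurableSet_Icc (hsub1 hu) (hsub1 hv),
    eq_sub_of_add_eq' hxsum, eq_sub_of_add_eq' hysum]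
  rcases he.eq_zero_or_eq_one (Icc 0 (⌊s⌋ + 1 - s) ×ˢ Icc 0 1) with hx | hx <;>
    rcases he.eq_zero_or_eq_one (Icc 0 1 ×ˢ Icc 0 (⌊t⌋ + 1 - t)) with hy | hy <;>
    (simp only [hx, hy]; simp)

end IsSquareCharacter

theorem Eproj_increasing_general
    {K : Type*} [NormedAddCommGroup K] [InnerProductSpace ℂ K] [CompleteSpace K]
    (Pm Qn : ℕ → K →L[ℂ] K)
    (hPP : ∀ i j, 1 ≤ i → 1 ≤ j → Pm i ∘L Pm j = if i = j then Pm i else 0)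
    (hQQ : ∀ i j, 1 ≤ i → 1 ≤ j → Qn i ∘L Qn j = if i = j then Qn i else 0)
    -- `e S = 1_S(z₀)` for a character `z₀` of `L^∞([0,1]², λ)`
    (e : Set (ℝ × ℝ) → ℂ)
    (he01 : ∀ S : Set (ℝ × ℝ), e S = 0 ∨ e S = 1)
    (heuniv : e Set.univ = 1)
    (hemul : ∀ S T : Set (ℝ × ℝ), MeasurableSet S → MeasurableSet T →
      e (S ∩ T) = e S * e T)
    (headd : ∀ S T : Set (ℝ × ℝ), MeasurableSet S → MeasurableSet T →
      (volume.restrict (Set.Icc (0 : ℝ) 1 ×ˢ Set.Icc (0 : ℝ) 1)) (S ∩ T) = 0 →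
      e (S ∪ T) = e S + e T)
    (henull : ∀ S : Set (ℝ × ℝ), MeasurableSet S →
      (volume.restrict (Set.Icc (0 : ℝ) 1 ×ˢ Set.Icc (0 : ℝ) 1)) S = 0 → e S = 0) :
    ∀ s t s₀ t₀ : ℝ, 0 ≤ s → 0 ≤ t → 0 ≤ s₀ → 0 ≤ t₀ →
      ∀ ξ : K, Eproj Pm Qn e (s + s₀, t + t₀) (Eproj Pm Qn e (s, t) ξ) =
        Eproj Pm Qn e (s, t) ξ := by
  intro s t s₀ t₀ hs ht hs₀ ht₀ ξ
  have he : IsSquareCharacter e := ⟨he01, heuniv, hemul, headd, henull⟩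
  rw [he.Eproj_eq_Fproj_stepIndex Pm Qn hs ht,
    he.Eproj_eq_Fproj_stepIndex Pm Qn (add_nonneg hs hs₀) (add_nonneg ht ht₀),
    ← ContinuousLinearMap.comp_apply]
  congr 1
  exact Fproj_comp_of_le hPP hQQ (stepIndex_nonneg _ hs) (stepIndex_nonneg _ ht)
    (he.monotone_stepIndex_left_strip (le_add_of_nonneg_right hs₀))
    (he.monotone_stepIndex_lower_strip (le_add_of_nonneg_right ht₀))

/-- The map `E : ℝ₊² → P(K)` is increasing: for `(s,t), (s₀,t₀) ∈ ℝ₊²` one has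
`E_{(s,t)} ≤ E_{(s+s₀,t+t₀)}`, i.e. the larger projection fixes the range of the smaller. -/
theorem Eproj_increasing
    {K : Type*} [NormedAddCommGroup K] [InnerProductSpace ℂ K] [CompleteSpace K]
    [SecondCountableTopology K]
    (Pm Qn : ℕ → K →L[ℂ] K)
    (hPP : ∀ i j, 1 ≤ i → 1 ≤ j → Pm i ∘L Pm j = if i = j then Pm i else 0)
    (hQQ : ∀ i j, 1 ≤ i → 1 ≤ j → Qn i ∘L Qn j = if i = j then Qn i else 0)
    (hPsa : ∀ i, 1 ≤ i → IsSelfAdjoint (Pm i))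
    (hQsa : ∀ i, 1 ≤ i → IsSelfAdjoint (Qn i))
    (a b c d : ℝ) (ha : a ∈ Set.Ioo (0 : ℝ) 1) (hb : b ∈ Set.Ioo (0 : ℝ) 1)
    (hc : c ∈ Set.Ioo (0 : ℝ) 1) (hd : d ∈ Set.Ioo (0 : ℝ) 1) (hab : a < b) (hcd : c < d)
    -- `e S = 1_S(z₀)` for a character `z₀` of `L^∞([0,1]², λ)`
    (e : Set (ℝ × ℝ) → ℂ)
    (he01 : ∀ S : Set (ℝ × ℝ), e S = 0 ∨ e S = 1)
    (heuniv : e Set.univ = 1)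
    (hemul : ∀ S T : Set (ℝ × ℝ), MeasurableSet S → MeasurableSet T →
      e (S ∩ T) = e S * e T)
    (headd : ∀ S T : Set (ℝ × ℝ), MeasurableSet S → MeasurableSet T →
      (volume.restrict (Set.Icc (0 : ℝ) 1 ×ˢ Set.Icc (0 : ℝ) 1)) (S ∩ T) = 0 →
      e (S ∪ T) = e S + e T)
    (henull : ∀ S : Set (ℝ × ℝ), MeasurableSet S →
      (volume.restrict (Set.Icc (0 : ℝ) 1 ×ˢ Set.Icc (0 : ℝ) 1)) S = 0 → e S = 0)
    (hz₀ : e (Set.Icc a b ×ˢ Set.Icc c d) ≠ 0) :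
    ∀ s t s₀ t₀ : ℝ, 0 ≤ s → 0 ≤ t → 0 ≤ s₀ → 0 ≤ t₀ →
      ∀ ξ : K, Eproj Pm Qn e (s + s₀, t + t₀) (Eproj Pm Qn e (s, t) ξ) =
        Eproj Pm Qn e (s, t) ξ :=
  Eproj_increasing_general Pm Qn hPP hQQ e he01 heuniv hemul headd henull

end
end

section
/- With K, (P_m), (Q_n), F, z₀ and E as in the context: for every (m,n) ∈ ℕ², the set {(s,t) ∈ ℝ₊² : E_{(s,t)} = F_{(m,n)}} contains a Lebesgue measurable set of positive measure; in fact it contains the set A = {(s,t) ∈ [m,m+1)×[n,n+1) : (m+1−s, n+1−t) ∈ (b,1)×(d,1)}. -/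
open MeasureTheory

noncomputable section

/-!
The character `z₀` is multiplicative and does not vanish on the box `B = [a,b] × [c,d]`, so
`B = B ∩ T` forces `1_T(z₀) = 1` for every measurable `T ⊇ B`, and `∅ = B ∩ T` forces
`1_T(z₀) = 0` for every measurable `T` disjoint from `B`. For `(s,t) ∈ A` the corner
`(m+1-s, n+1-t)` lies beyond `B` in both coordinates, so `R₀(s,t) ⊇ B` while `R₁`, `R₂`, `R₃`
miss `B`, and `E_{(s,t)} = F_{(m,n)}`. Finally `A = (m, m+1-b) × (n, n+1-d)` has positive area.
-/

open Set

section MapInter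

variable {α R : Type*} {e : Set α → R} {B T : Set α}

theorem eq_one_of_map_inter_of_subset [MonoidWithZero R] [IsLeftCancelMulZero R]
    (hinter : e (B ∩ T) = e B * e T) (hB : e B ≠ 0) (hBT : B ⊆ T) : e T = 1 := by
  rw [inter_eq_left.mpr hBT, eq_comm] at hinter
  exact (mul_eq_left₀ hB).mp hinter

theorem eq_zero_of_map_inter_of_disjoint [MulZeroClass R] [NoZeroDivisors R]
    (hempty : e ∅ = 0) (hinter : e (B ∩ T) = e B * e T)
    (hB : e B ≠ 0) (hBT : Disjoint B T) : e T = 0 := by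
  rw [hBT.inter_eq, hempty, eq_comm] at hinter
  exact (mul_eq_zero.mp hinter).resolve_left hB

end MapInter

theorem Icc_disjoint_Icc_of_lt {α : Type*} [Preorder α] {x y z w : α} (hyz : y < z) :
    Disjoint (Icc x y) (Icc z w) :=
  disjoint_left.mpr fun _ hx hz => (hyz.trans_le hz.1).not_ge hx.2

theorem Eproj_eq_Fproj_floor_of_box {K : Type*} [NormedAddCommGroup K] [InnerProductSpace ℂ K]
    [CompleteSpace K] (Pm Qn : ℕ → K →L[ℂ] K) {e : Set (ℝ × ℝ) → ℂ} {a b c d s t : ℝ}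
    (hempty : e ∅ = 0)
    (hmul : ∀ T, MeasurableSet T → e (Icc a b ×ˢ Icc c d ∩ T) = e (Icc a b ×ˢ Icc c d) * e T)
    (hbox : e (Icc a b ×ˢ Icc c d) ≠ 0) (ha : 0 ≤ a) (hc : 0 ≤ c) (hs : 0 ≤ s) (ht : 0 ≤ t)
    (hbs : b < ⌊s⌋ + 1 - s) (hdt : d < ⌊t⌋ + 1 - t) :
    Eproj Pm Qn e (s, t) = Fproj Pm Qn (⌊s⌋, ⌊t⌋) := by
  have hrect {x y z w : ℝ} : MeasurableSet (Icc x y ×ˢ Icc z w) :=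
    measurableSet_Icc.prod measurableSet_Icc
  have hzero {x y z w : ℝ} (h : Disjoint (Icc a b ×ˢ Icc c d) (Icc x y ×ˢ Icc z w)) :
      e (Icc x y ×ˢ Icc z w) = 0 :=
    eq_zero_of_map_inter_of_disjoint hempty (hmul _ hrect) hbox h
  rw [Eproj, if_pos ⟨hs, ht⟩]
  generalize (⌊s⌋ : ℝ) + 1 - s = u at hbs ⊢
  generalize (⌊t⌋ : ℝ) + 1 - t = v at hdt ⊢
  have hR₀ : e (Icc 0 u ×ˢ Icc 0 v) = 1 := eq_one_of_map_inter_of_subset (hmul _ hrect) hbox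
    (prod_mono (Icc_subset_Icc ha hbs.le) (Icc_subset_Icc hc hdt.le))
  have hR₁ : e (Icc 0 u ×ˢ Icc v 1) = 0 :=
    hzero (disjoint_prod.mpr (.inr (Icc_disjoint_Icc_of_lt hdt)))
  have hR₂ : e (Icc u 1 ×ˢ Icc 0 v) = 0 :=
    hzero (disjoint_prod.mpr (.inl (Icc_disjoint_Icc_of_lt hbs)))
  have hR₃ : e (Icc u 1 ×ˢ Icc v 1) = 0 :=
    hzero (disjoint_prod.mpr (.inl (Icc_disjoint_Icc_of_lt hbs)))
  simp only [hR₀, hR₁, hR₂, hR₃, one_smul, zero_smul, add_zero]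

theorem setOf_mem_Ico_sub_mem_Ioo_eq_Ioo_prod (m n : ℝ) {b d : ℝ} (hb : 0 < b) (hd : 0 < d) :
    {q : ℝ × ℝ | q.1 ∈ Ico m (m + 1) ∧ q.2 ∈ Ico n (n + 1) ∧
      m + 1 - q.1 ∈ Ioo b 1 ∧ n + 1 - q.2 ∈ Ioo d 1} =
      Ioo m (m + 1 - b) ×ˢ Ioo n (n + 1 - d) := by
  ext ⟨s, t⟩
  simp only [mem_ofPred_eq, mem_Ico, mem_Ioo, mem_prod]
  constructor
  · rintro ⟨-, -, ⟨hbs, hs1⟩, ⟨hdt, ht1⟩⟩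
    exact ⟨⟨by linarith, by linarith⟩, by linarith, by linarith⟩
  · rintro ⟨⟨hms, hsb⟩, hnt, htd⟩
    exact ⟨⟨hms.le, by linarith⟩, ⟨hnt.le, by linarith⟩, ⟨by linarith, by linarith⟩,
      by linarith, by linarith⟩

theorem Eproj_eq_Fproj_on_positive_measure_set_general
        {K : Type*} [NormedAddCommGroup K] [InnerProductSpace ℂ K] [CompleteSpace K]
    (Pm Qn : ℕ → K →L[ℂ] K)
    (a b c d : ℝ) (ha : a ∈ Set.Ioo (0 : ℝ) 1) (hb : b ∈ Set.Ioo (0 : ℝ) 1)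
    (hc : c ∈ Set.Ioo (0 : ℝ) 1) (hd : d ∈ Set.Ioo (0 : ℝ) 1)
    -- `e S = 1_S(z₀)` for a character `z₀` of `L^∞([0,1]², λ)`
    (e : Set (ℝ × ℝ) → ℂ)
    (hemul : ∀ S T : Set (ℝ × ℝ), MeasurableSet S → MeasurableSet T →
      e (S ∩ T) = e S * e T)
    (henull : ∀ S : Set (ℝ × ℝ), MeasurableSet S →
      (volume.restrict (Set.Icc (0 : ℝ) 1 ×ˢ Set.Icc (0 : ℝ) 1)) S = 0 → e S = 0)
    (hz₀ : e (Set.Icc a b ×ˢ Set.Icc c d) ≠ 0) :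
    ∀ m n : ℕ,
      ({q : ℝ × ℝ | q.1 ∈ Set.Ico (m : ℝ) ((m : ℝ) + 1) ∧ q.2 ∈ Set.Ico (n : ℝ) ((n : ℝ) + 1) ∧
          ((m : ℝ) + 1 - q.1) ∈ Set.Ioo b 1 ∧ ((n : ℝ) + 1 - q.2) ∈ Set.Ioo d 1} ⊆
        {q : ℝ × ℝ | Eproj Pm Qn e q = Fproj Pm Qn ((m : ℤ), (n : ℤ))}) ∧
      MeasurableSet {q : ℝ × ℝ | q.1 ∈ Set.Ico (m : ℝ) ((m : ℝ) + 1) ∧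
          q.2 ∈ Set.Ico (n : ℝ) ((n : ℝ) + 1) ∧
          ((m : ℝ) + 1 - q.1) ∈ Set.Ioo b 1 ∧ ((n : ℝ) + 1 - q.2) ∈ Set.Ioo d 1} ∧
      0 < (volume : Measure (ℝ × ℝ))
        {q : ℝ × ℝ | q.1 ∈ Set.Ico (m : ℝ) ((m : ℝ) + 1) ∧
          q.2 ∈ Set.Ico (n : ℝ) ((n : ℝ) + 1) ∧
          ((m : ℝ) + 1 - q.1) ∈ Set.Ioo b 1 ∧ ((n : ℝ) + 1 - q.2) ∈ Set.Ioo d 1} := by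
  intro m n
  have hempty : e ∅ = 0 := henull ∅ MeasurableSet.empty (by simp)
  have hmul := fun T => hemul (Icc a b ×ˢ Icc c d) T
    (measurableSet_Icc.prod measurableSet_Icc)
  rw [setOf_mem_Ico_sub_mem_Ioo_eq_Ioo_prod (m : ℝ) (n : ℝ) hb.1 hd.1]
  refine ⟨?_, measurableSet_Ioo.prod measurableSet_Ioo, ?_⟩
  · rintro ⟨s, t⟩ ⟨⟨hms, hsb⟩, hnt, htd⟩
    have hfs : ⌊s⌋ = (m : ℤ) :=
      Int.floor_eq_iff.mpr ⟨by push_cast; linarith, by push_cast; linarith [hb.1]⟩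
    have hft : ⌊t⌋ = (n : ℤ) :=
      Int.floor_eq_iff.mpr ⟨by push_cast; linarith, by push_cast; linarith [hd.1]⟩
    have h := Eproj_eq_Fproj_floor_of_box Pm Qn hempty hmul hz₀ ha.1.le hc.1.le
      ((Nat.cast_nonneg m).trans hms.le) ((Nat.cast_nonneg n).trans hnt.le)
      (by rw [hfs]; push_cast; linarith) (by rw [hft]; push_cast; linarith)
    rwa [hfs, hft] at h
  · rw [Measure.volume_eq_prod, Measure.prod_prod, Real.volume_Ioo, Real.volume_Ioo]
    exact ENNReal.mul_pos (ENNReal.ofReal_pos.mpr (by linarith [hb.2])).ne'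
      (ENNReal.ofReal_pos.mpr (by linarith [hd.2])).ne'

/-- For every `(m,n) ∈ ℕ²`, the set
`{(s,t) ∈ ℝ₊² : E_{(s,t)} = F_{(m,n)}}` contains a Lebesgue measurable set of positive
measure; in fact it contains
`A = {(s,t) ∈ [m,m+1) × [n,n+1) : (m+1-s, n+1-t) ∈ (b,1) × (d,1)}`. -/
theorem Eproj_eq_Fproj_on_positive_measure_set
        {K : Type*} [NormedAddCommGroup K] [InnerProductSpace ℂ K] [CompleteSpace K]
    [SecondCountableTopology K]
    (Pm Qn : ℕ → K →L[ℂ] K)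
    (hPP : ∀ i j, 1 ≤ i → 1 ≤ j → Pm i ∘L Pm j = if i = j then Pm i else 0)
    (hQQ : ∀ i j, 1 ≤ i → 1 ≤ j → Qn i ∘L Qn j = if i = j then Qn i else 0)
    (hPsa : ∀ i, 1 ≤ i → IsSelfAdjoint (Pm i))
    (hQsa : ∀ i, 1 ≤ i → IsSelfAdjoint (Qn i))
    (a b c d : ℝ) (ha : a ∈ Set.Ioo (0 : ℝ) 1) (hb : b ∈ Set.Ioo (0 : ℝ) 1)
    (hc : c ∈ Set.Ioo (0 : ℝ) 1) (hd : d ∈ Set.Ioo (0 : ℝ) 1) (hab : a < b) (hcd : c < d)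
    -- `e S = 1_S(z₀)` for a character `z₀` of `L^∞([0,1]², λ)`
    (e : Set (ℝ × ℝ) → ℂ)
    (he01 : ∀ S : Set (ℝ × ℝ), e S = 0 ∨ e S = 1)
    (heuniv : e Set.univ = 1)
    (hemul : ∀ S T : Set (ℝ × ℝ), MeasurableSet S → MeasurableSet T →
      e (S ∩ T) = e S * e T)
    (headd : ∀ S T : Set (ℝ × ℝ), MeasurableSet S → MeasurableSet T →
      (volume.restrict (Set.Icc (0 : ℝ) 1 ×ˢ Set.Icc (0 : ℝ) 1)) (S ∩ T) = 0 →
      e (S ∪ T) = e S + e T)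
    (henull : ∀ S : Set (ℝ × ℝ), MeasurableSet S →
      (volume.restrict (Set.Icc (0 : ℝ) 1 ×ˢ Set.Icc (0 : ℝ) 1)) S = 0 → e S = 0)
    (hz₀ : e (Set.Icc a b ×ˢ Set.Icc c d) ≠ 0) :
    ∀ m n : ℕ,
      ({q : ℝ × ℝ | q.1 ∈ Set.Ico (m : ℝ) ((m : ℝ) + 1) ∧ q.2 ∈ Set.Ico (n : ℝ) ((n : ℝ) + 1) ∧
          ((m : ℝ) + 1 - q.1) ∈ Set.Ioo b 1 ∧ ((n : ℝ) + 1 - q.2) ∈ Set.Ioo d 1} ⊆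
        {q : ℝ × ℝ | Eproj Pm Qn e q = Fproj Pm Qn ((m : ℤ), (n : ℤ))}) ∧
      MeasurableSet {q : ℝ × ℝ | q.1 ∈ Set.Ico (m : ℝ) ((m : ℝ) + 1) ∧
          q.2 ∈ Set.Ico (n : ℝ) ((n : ℝ) + 1) ∧
          ((m : ℝ) + 1 - q.1) ∈ Set.Ioo b 1 ∧ ((n : ℝ) + 1 - q.2) ∈ Set.Ioo d 1} ∧
      0 < (volume : Measure (ℝ × ℝ))
        {q : ℝ × ℝ | q.1 ∈ Set.Ico (m : ℝ) ((m : ℝ) + 1) ∧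
          q.2 ∈ Set.Ico (n : ℝ) ((n : ℝ) + 1) ∧
          ((m : ℝ) + 1 - q.1) ∈ Set.Ioo b 1 ∧ ((n : ℝ) + 1 - q.2) ∈ Set.Ioo d 1} :=
  Eproj_eq_Fproj_on_positive_measure_set_general Pm Qn a b c d ha hb hc hd e hemul henull hz₀
end
end

section
/- With the construction in the context (P = ℝ₊², G = ℝ², E extended by 0 outside ℝ₊², L = L²(ℝ²,K), Ẽ, U, W as defined): Ẽ W_{(s,t)} Ẽ = W_{(s,t)} Ẽ for every (s,t) ∈ ℝ₊², i.e., the subspace H := Ran(Ẽ) is invariant under W_{(s,t)} for all (s,t) ∈ ℝ₊²; consequently V_{(s,t)} := W_{(s,t)}|_H defines a strongly continuous semigroup of isometries on H, each U_{(x,y)} maps H onto H, and (U|_H, V) is a weak Weyl pair for P = ℝ₊². -/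
open MeasureTheory Complex

noncomputable section

lemma sum_proj_comp {K : Type*} [NormedAddCommGroup K] [InnerProductSpace ℂ K] [CompleteSpace K]
    (R : ℕ → K →L[ℂ] K)
    (hRR : ∀ i j, 1 ≤ i → 1 ≤ j → R i ∘L R j = if i = j then R i else 0)
    (M N : ℕ) (hNM : N ≤ M) :
    (∑ i ∈ Finset.Icc 1 M, R i) ∘L (∑ j ∈ Finset.Icc 1 N, R j) = ∑ j ∈ Finset.Icc 1 N, R j := by
  have : (∑ i ∈ Finset.Icc 1 M, R i) ∘L (∑ j ∈ Finset.Icc 1 N, R j)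
      = ∑ i ∈ Finset.Icc 1 M, ∑ j ∈ Finset.Icc 1 N, (R i ∘L R j) := by
    show (∑ i ∈ Finset.Icc 1 M, R i) * (∑ j ∈ Finset.Icc 1 N, R j)
      = ∑ i ∈ Finset.Icc 1 M, ∑ j ∈ Finset.Icc 1 N, (R i * R j)
    rw [Finset.sum_mul_sum]
  rw [this]
  rw [Finset.sum_comm]
  refine Finset.sum_congr rfl fun j hj => ?_
  simp only [Finset.mem_Icc] at hj
  have : ∀ i ∈ Finset.Icc 1 M, R i ∘L R j = if i = j then R i else 0 := fun i hi => by
    simp only [Finset.mem_Icc] at hi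
    exact hRR i j hi.1 hj.1
  rw [Finset.sum_congr rfl this, Finset.sum_ite_eq' (Finset.Icc 1 M) j R,
    if_pos (Finset.mem_Icc.2 ⟨hj.1, hj.2.trans hNM⟩)]

lemma Fproj_mono {K : Type*} [NormedAddCommGroup K] [InnerProductSpace ℂ K] [CompleteSpace K]
    (Pm Qn : ℕ → K →L[ℂ] K)
    (hPP : ∀ i j, 1 ≤ i → 1 ≤ j → Pm i ∘L Pm j = if i = j then Pm i else 0)
    (hQQ : ∀ i j, 1 ≤ i → 1 ≤ j → Qn i ∘L Qn j = if i = j then Qn i else 0)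
    (p q : ℤ × ℤ) (h1 : 0 ≤ q.1) (h2 : 0 ≤ q.2) (h3 : q.1 ≤ p.1) (h4 : q.2 ≤ p.2) :
    Fproj Pm Qn p ∘L Fproj Pm Qn q = Fproj Pm Qn q := by
  obtain ⟨p1, p2⟩ := p
  obtain ⟨q1, q2⟩ := q
  simp only at h1 h2 h3 h4
  by_cases hq1 : 1 ≤ q1 <;> by_cases hq2 : 1 ≤ q2
  · -- Fq = 1, Fp = 1
    have e1 : Fproj Pm Qn (q1, q2) = 1 := by
      simp only [Fproj]
      rw [if_neg (by omega), if_neg (by omega), if_pos (by omega)]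
    have e2 : Fproj Pm Qn (p1, p2) = 1 := by
      simp only [Fproj]
      rw [if_neg (by omega), if_neg (by omega), if_pos (by omega)]
    rw [e1, e2]; rfl
  · -- q2 = 0, Fq = sum P
    have hq2' : q2 = 0 := by omega
    have e1 : Fproj Pm Qn (q1, q2) = ∑ k ∈ Finset.Icc 1 q1.toNat, Pm k := by
      simp only [Fproj]; rw [if_pos (by omega)]
    rw [e1]
    by_cases hp2 : 1 ≤ p2
    · have e2 : Fproj Pm Qn (p1, p2) = 1 := by
        simp only [Fproj]
        rw [if_neg (by omega), if_neg (by omega), if_pos (by omega)]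
      rw [e2]; rfl
    · have hp2' : p2 = 0 := by omega
      have e2 : Fproj Pm Qn (p1, p2) = ∑ k ∈ Finset.Icc 1 p1.toNat, Pm k := by
        simp only [Fproj]; rw [if_pos (by omega)]
      rw [e2]
      exact sum_proj_comp Pm hPP _ _ (Int.toNat_le_toNat h3)
  · -- q1 = 0, q2 ≥ 1
    have hq1' : q1 = 0 := by omega
    have e1 : Fproj Pm Qn (q1, q2) = ∑ k ∈ Finset.Icc 1 q2.toNat, Qn k := by
      simp only [Fproj]; rw [if_neg (by omega), if_pos (by omega)]
    rw [e1]
    by_cases hp1 : 1 ≤ p1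
    · have e2 : Fproj Pm Qn (p1, p2) = 1 := by
        simp only [Fproj]
        rw [if_neg (by omega), if_neg (by omega), if_pos (by omega)]
      rw [e2]; rfl
    · have hp1' : p1 = 0 := by omega
      have e2 : Fproj Pm Qn (p1, p2) = ∑ k ∈ Finset.Icc 1 p2.toNat, Qn k := by
        simp only [Fproj]; rw [if_neg (by omega), if_pos (by omega)]
      rw [e2]
      exact sum_proj_comp Qn hQQ _ _ (Int.toNat_le_toNat h4)
  · -- q = 0
    have e1 : Fproj Pm Qn (q1, q2) = 0 := by
      simp only [Fproj]
      rw [if_neg (by omega), if_neg (by omega), if_neg (by omega)]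
    rw [e1]
    exact ContinuousLinearMap.comp_zero _


/-- index functions -/
def idxE (e : Set (ℝ × ℝ) → ℂ) (x : ℝ) : ℤ :=
  if e (Set.Icc 0 ((⌊x⌋ : ℝ) + 1 - x) ×ˢ Set.Icc (0:ℝ) 1) = 1 then ⌊x⌋ else ⌊x⌋ + 1

def idyE (e : Set (ℝ × ℝ) → ℂ) (y : ℝ) : ℤ :=
  if e (Set.Icc (0:ℝ) 1 ×ˢ Set.Icc 0 ((⌊y⌋ : ℝ) + 1 - y)) = 1 then ⌊y⌋ else ⌊y⌋ + 1

section echar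
variable (e : Set (ℝ × ℝ) → ℂ)
    (he01 : ∀ S : Set (ℝ × ℝ), e S = 0 ∨ e S = 1)
    (heuniv : e Set.univ = 1)
    (hemul : ∀ S T : Set (ℝ × ℝ), MeasurableSet S → MeasurableSet T →
      e (S ∩ T) = e S * e T)
    (headd : ∀ S T : Set (ℝ × ℝ), MeasurableSet S → MeasurableSet T →
      (volume.restrict (Set.Icc (0 : ℝ) 1 ×ˢ Set.Icc (0 : ℝ) 1)) (S ∩ T) = 0 →
      e (S ∪ T) = e S + e T)
    (henull : ∀ S : Set (ℝ × ℝ), MeasurableSet S →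
      (volume.restrict (Set.Icc (0 : ℝ) 1 ×ˢ Set.Icc (0 : ℝ) 1)) S = 0 → e S = 0)

-- restricted measure kills null sets
lemma res_null (S : Set (ℝ × ℝ)) (hS : volume S = 0) :
    (volume.restrict (Set.Icc (0 : ℝ) 1 ×ˢ Set.Icc (0 : ℝ) 1)) S = 0 :=
  le_antisymm ((Measure.restrict_le_self S).trans hS.le) zero_le

lemma seg_null_v (α : ℝ) : volume (({α} : Set ℝ) ×ˢ Set.Icc (0:ℝ) 1) = 0 := by
  rw [MeasureTheory.Measure.volume_eq_prod, Measure.prod_prod]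
  simp

lemma seg_null_h (β : ℝ) : volume ((Set.Icc (0:ℝ) 1) ×ˢ ({β} : Set ℝ)) = 0 := by
  rw [MeasureTheory.Measure.volume_eq_prod, Measure.prod_prod]
  simp

include heuniv headd henull in
lemma e_R_one : e (Set.Icc (0:ℝ) 1 ×ˢ Set.Icc (0:ℝ) 1) = 1 := by
  set R : Set (ℝ × ℝ) := Set.Icc (0:ℝ) 1 ×ˢ Set.Icc (0:ℝ) 1 with hRdef
  have hm : MeasurableSet R := (measurableSet_Icc.prod measurableSet_Icc)
  have hcompl : e Rᶜ = 0 := by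
    refine henull _ hm.compl ?_
    rw [Measure.restrict_apply hm.compl, Set.compl_inter_self]
    exact measure_empty
  have h := headd R Rᶜ hm hm.compl (by rw [Set.inter_compl_self]; exact measure_empty)
  rw [Set.union_compl_self, heuniv, hcompl, add_zero] at h
  exact h.symm

include heuniv headd henull in
lemma e_split_x (α : ℝ) (h0 : 0 ≤ α) (h1 : α ≤ 1) :
    e (Set.Icc α 1 ×ˢ Set.Icc (0:ℝ) 1) = 1 - e (Set.Icc 0 α ×ˢ Set.Icc (0:ℝ) 1) := by
  have hnull : (volume.restrict (Set.Icc (0 : ℝ) 1 ×ˢ Set.Icc (0 : ℝ) 1))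
      ((Set.Icc 0 α ×ˢ Set.Icc (0:ℝ) 1) ∩ (Set.Icc α 1 ×ˢ Set.Icc (0:ℝ) 1)) = 0 := by
    refine res_null _ ?_
    rw [Set.prod_inter_prod, Set.inter_self, Set.Icc_inter_Icc]
    refine measure_mono_null (Set.prod_mono_left ?_) (seg_null_v α)
    rw [max_comm, max_eq_left h0, min_eq_left h1, Set.Icc_self]
  have h := headd _ _ (measurableSet_Icc.prod measurableSet_Icc)
    (measurableSet_Icc.prod measurableSet_Icc) hnull
  rw [← Set.union_prod, Set.Icc_union_Icc_eq_Icc h0 h1] at h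
  rw [e_R_one e heuniv headd henull] at h
  linear_combination -h

include heuniv headd henull in
lemma e_split_y (β : ℝ) (h0 : 0 ≤ β) (h1 : β ≤ 1) :
    e (Set.Icc (0:ℝ) 1 ×ˢ Set.Icc β 1) = 1 - e (Set.Icc (0:ℝ) 1 ×ˢ Set.Icc 0 β) := by
  have hnull : (volume.restrict (Set.Icc (0 : ℝ) 1 ×ˢ Set.Icc (0 : ℝ) 1))
      ((Set.Icc (0:ℝ) 1 ×ˢ Set.Icc 0 β) ∩ (Set.Icc (0:ℝ) 1 ×ˢ Set.Icc β 1)) = 0 := by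
    refine res_null _ ?_
    rw [Set.prod_inter_prod, Set.inter_self, Set.Icc_inter_Icc]
    refine measure_mono_null (Set.prod_mono_right ?_) (seg_null_h β)
    rw [max_comm, max_eq_left h0, min_eq_left h1, Set.Icc_self]
  have h := headd _ _ (measurableSet_Icc.prod measurableSet_Icc)
    (measurableSet_Icc.prod measurableSet_Icc) hnull
  rw [← Set.prod_union, Set.Icc_union_Icc_eq_Icc h0 h1] at h
  rw [e_R_one e heuniv headd henull] at h
  linear_combination -h

include hemul in
lemma e_prod_mul (A B : Set ℝ) (hA : A ⊆ Set.Icc 0 1) (hB : B ⊆ Set.Icc 0 1)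
    (hAm : MeasurableSet A) (hBm : MeasurableSet B) :
    e (A ×ˢ B) = e (A ×ˢ Set.Icc (0:ℝ) 1) * e (Set.Icc (0:ℝ) 1 ×ˢ B) := by
  rw [← hemul _ _ (hAm.prod measurableSet_Icc) (measurableSet_Icc.prod hBm),
    Set.prod_inter_prod, Set.inter_eq_self_of_subset_left hA,
    Set.inter_eq_self_of_subset_right hB]

include hemul in
lemma chi_mono (α α' : ℝ) (h0 : α ≤ α')
    (h : e (Set.Icc (0:ℝ) α ×ˢ Set.Icc (0:ℝ) 1) = 1) :
    e (Set.Icc (0:ℝ) α' ×ˢ Set.Icc (0:ℝ) 1) = 1 := by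
  have hh := hemul (Set.Icc (0:ℝ) α ×ˢ Set.Icc (0:ℝ) 1) (Set.Icc (0:ℝ) α' ×ˢ Set.Icc (0:ℝ) 1)
    (measurableSet_Icc.prod measurableSet_Icc) (measurableSet_Icc.prod measurableSet_Icc)
  rw [Set.prod_inter_prod, Set.inter_self,
    Set.inter_eq_self_of_subset_left (Set.Icc_subset_Icc le_rfl h0), h, one_mul] at hh
  exact hh.symm

include hemul in
lemma eta_mono (β β' : ℝ) (h0 : β ≤ β')
    (h : e (Set.Icc (0:ℝ) 1 ×ˢ Set.Icc (0:ℝ) β) = 1) :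
    e (Set.Icc (0:ℝ) 1 ×ˢ Set.Icc (0:ℝ) β') = 1 := by
  have hh := hemul (Set.Icc (0:ℝ) 1 ×ˢ Set.Icc (0:ℝ) β) (Set.Icc (0:ℝ) 1 ×ˢ Set.Icc (0:ℝ) β')
    (measurableSet_Icc.prod measurableSet_Icc) (measurableSet_Icc.prod measurableSet_Icc)
  rw [Set.prod_inter_prod, Set.inter_self,
    Set.inter_eq_self_of_subset_left (Set.Icc_subset_Icc le_rfl h0), h, one_mul] at hh
  exact hh.symm

include hemul in
lemma idxE_mono (x x' : ℝ) (hxx : x ≤ x') : idxE e x ≤ idxE e x' := by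
  by_cases hf : ⌊x⌋ = ⌊x'⌋
  · have halpha : (⌊x'⌋ : ℝ) + 1 - x' ≤ (⌊x⌋ : ℝ) + 1 - x := by
      rw [hf]; linarith
    unfold idxE
    by_cases h' : e (Set.Icc 0 ((⌊x'⌋ : ℝ) + 1 - x') ×ˢ Set.Icc (0:ℝ) 1) = 1
    · rw [if_pos h', if_pos (chi_mono e hemul _ _ halpha h'), hf]
    · rw [if_neg h']
      split
      · omega
      · omega
  · have hff : ⌊x⌋ < ⌊x'⌋ := lt_of_le_of_ne (Int.floor_le_floor hxx) hf
    unfold idxE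
    split <;> split <;> omega

include hemul in
lemma idyE_mono (y y' : ℝ) (hyy : y ≤ y') : idyE e y ≤ idyE e y' := by
  by_cases hf : ⌊y⌋ = ⌊y'⌋
  · have hbeta : (⌊y'⌋ : ℝ) + 1 - y' ≤ (⌊y⌋ : ℝ) + 1 - y := by
      rw [hf]; linarith
    unfold idyE
    by_cases h' : e (Set.Icc (0:ℝ) 1 ×ˢ Set.Icc 0 ((⌊y'⌋ : ℝ) + 1 - y')) = 1
    · rw [if_pos h', if_pos (eta_mono e hemul _ _ hbeta h'), hf]
    · rw [if_neg h']
      split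
      · omega
      · omega
  · have hff : ⌊y⌋ < ⌊y'⌋ := lt_of_le_of_ne (Int.floor_le_floor hyy) hf
    unfold idyE
    split <;> split <;> omega

end echar

lemma Eproj_eq_Fproj {K : Type*} [NormedAddCommGroup K] [InnerProductSpace ℂ K] [CompleteSpace K]
    (Pm Qn : ℕ → K →L[ℂ] K) (e : Set (ℝ × ℝ) → ℂ)
    (he01 : ∀ S : Set (ℝ × ℝ), e S = 0 ∨ e S = 1)
    (heuniv : e Set.univ = 1)
    (hemul : ∀ S T : Set (ℝ × ℝ), MeasurableSet S → MeasurableSet T →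
      e (S ∩ T) = e S * e T)
    (headd : ∀ S T : Set (ℝ × ℝ), MeasurableSet S → MeasurableSet T →
      (volume.restrict (Set.Icc (0 : ℝ) 1 ×ˢ Set.Icc (0 : ℝ) 1)) (S ∩ T) = 0 →
      e (S ∪ T) = e S + e T)
    (henull : ∀ S : Set (ℝ × ℝ), MeasurableSet S →
      (volume.restrict (Set.Icc (0 : ℝ) 1 ×ˢ Set.Icc (0 : ℝ) 1)) S = 0 → e S = 0)
    (r : ℝ × ℝ) (h1 : 0 ≤ r.1) (h2 : 0 ≤ r.2) :
    Eproj Pm Qn e r = Fproj Pm Qn (idxE e r.1, idyE e r.2) := by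
  set α : ℝ := (⌊r.1⌋ : ℝ) + 1 - r.1 with hαdef
  set β : ℝ := (⌊r.2⌋ : ℝ) + 1 - r.2 with hβdef
  have hα0 : 0 ≤ α := by
    have := Int.lt_floor_add_one r.1; simp only [hαdef]; linarith
  have hα1 : α ≤ 1 := by
    have := Int.floor_le r.1; simp only [hαdef]; linarith
  have hβ0 : 0 ≤ β := by
    have := Int.lt_floor_add_one r.2; simp only [hβdef]; linarith
  have hβ1 : β ≤ 1 := by
    have := Int.floor_le r.2; simp only [hβdef]; linarith
  -- the four coefficients as products
  have hIccA : Set.Icc (0:ℝ) α ⊆ Set.Icc 0 1 := Set.Icc_subset_Icc le_rfl hα1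
  have hIccA' : Set.Icc α 1 ⊆ Set.Icc (0:ℝ) 1 := Set.Icc_subset_Icc hα0 le_rfl
  have hIccB : Set.Icc (0:ℝ) β ⊆ Set.Icc 0 1 := Set.Icc_subset_Icc le_rfl hβ1
  have hIccB' : Set.Icc β 1 ⊆ Set.Icc (0:ℝ) 1 := Set.Icc_subset_Icc hβ0 le_rfl
  set χ : ℂ := e (Set.Icc (0:ℝ) α ×ˢ Set.Icc (0:ℝ) 1) with hχdef
  set η : ℂ := e (Set.Icc (0:ℝ) 1 ×ˢ Set.Icc (0:ℝ) β) with hηdef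
  have c1 : e (Set.Icc (0:ℝ) α ×ˢ Set.Icc (0:ℝ) β) = χ * η :=
    e_prod_mul e hemul _ _ hIccA hIccB measurableSet_Icc measurableSet_Icc
  have c2 : e (Set.Icc (0:ℝ) α ×ˢ Set.Icc β 1) = χ * (1 - η) := by
    rw [e_prod_mul e hemul _ _ hIccA hIccB' measurableSet_Icc measurableSet_Icc,
      e_split_y e heuniv headd henull β hβ0 hβ1]
  have c3 : e (Set.Icc α 1 ×ˢ Set.Icc (0:ℝ) β) = (1 - χ) * η := by
    rw [e_prod_mul e hemul _ _ hIccA' hIccB measurableSet_Icc measurableSet_Icc,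
      e_split_x e heuniv headd henull α hα0 hα1]
  have c4 : e (Set.Icc α 1 ×ˢ Set.Icc β 1) = (1 - χ) * (1 - η) := by
    rw [e_prod_mul e hemul _ _ hIccA' hIccB' measurableSet_Icc measurableSet_Icc,
      e_split_x e heuniv headd henull α hα0 hα1, e_split_y e heuniv headd henull β hβ0 hβ1]
  have hE : Eproj Pm Qn e r =
      (χ * η) • Fproj Pm Qn (⌊r.1⌋, ⌊r.2⌋) +
      (χ * (1 - η)) • Fproj Pm Qn (⌊r.1⌋, ⌊r.2⌋ + 1) +
      ((1 - χ) * η) • Fproj Pm Qn (⌊r.1⌋ + 1, ⌊r.2⌋) +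
      ((1 - χ) * (1 - η)) • Fproj Pm Qn (⌊r.1⌋ + 1, ⌊r.2⌋ + 1) := by
    rw [Eproj, if_pos ⟨h1, h2⟩, ← hαdef, ← hβdef, c1, c2, c3, c4]
  have hidx : idxE e r.1 = if χ = 1 then ⌊r.1⌋ else ⌊r.1⌋ + 1 := rfl
  have hidy : idyE e r.2 = if η = 1 then ⌊r.2⌋ else ⌊r.2⌋ + 1 := rfl
  rcases he01 (Set.Icc (0:ℝ) α ×ˢ Set.Icc (0:ℝ) 1) with hχ | hχ <;>
    rcases he01 (Set.Icc (0:ℝ) 1 ×ˢ Set.Icc (0:ℝ) β) with hη | hη <;>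
      rw [← hχdef] at hχ <;> rw [← hηdef] at hη <;>
        rw [hE, hidx, hidy, hχ, hη] <;>
          norm_num

lemma Eproj_comp {K : Type*} [NormedAddCommGroup K] [InnerProductSpace ℂ K] [CompleteSpace K]
    (Pm Qn : ℕ → K →L[ℂ] K)
    (hPP : ∀ i j, 1 ≤ i → 1 ≤ j → Pm i ∘L Pm j = if i = j then Pm i else 0)
    (hQQ : ∀ i j, 1 ≤ i → 1 ≤ j → Qn i ∘L Qn j = if i = j then Qn i else 0)
    (e : Set (ℝ × ℝ) → ℂ)
    (he01 : ∀ S : Set (ℝ × ℝ), e S = 0 ∨ e S = 1)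
    (heuniv : e Set.univ = 1)
    (hemul : ∀ S T : Set (ℝ × ℝ), MeasurableSet S → MeasurableSet T →
      e (S ∩ T) = e S * e T)
    (headd : ∀ S T : Set (ℝ × ℝ), MeasurableSet S → MeasurableSet T →
      (volume.restrict (Set.Icc (0 : ℝ) 1 ×ˢ Set.Icc (0 : ℝ) 1)) (S ∩ T) = 0 →
      e (S ∪ T) = e S + e T)
    (henull : ∀ S : Set (ℝ × ℝ), MeasurableSet S →
      (volume.restrict (Set.Icc (0 : ℝ) 1 ×ˢ Set.Icc (0 : ℝ) 1)) S = 0 → e S = 0)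
    (p q : ℝ × ℝ) (h1 : 0 ≤ q.1) (h2 : 0 ≤ q.2) (h3 : q.1 ≤ p.1) (h4 : q.2 ≤ p.2) :
    Eproj Pm Qn e p ∘L Eproj Pm Qn e q = Eproj Pm Qn e q := by
  rw [Eproj_eq_Fproj Pm Qn e he01 heuniv hemul headd henull q h1 h2,
    Eproj_eq_Fproj Pm Qn e he01 heuniv hemul headd henull p (h1.trans h3) (h2.trans h4)]
  refine Fproj_mono Pm Qn hPP hQQ _ _ ?_ ?_ ?_ ?_
  · show (0:ℤ) ≤ idxE e q.1
    have : (0:ℤ) ≤ ⌊q.1⌋ := Int.floor_nonneg.2 h1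
    unfold idxE; split <;> omega
  · show (0:ℤ) ≤ idyE e q.2
    have : (0:ℤ) ≤ ⌊q.2⌋ := Int.floor_nonneg.2 h2
    unfold idyE; split <;> omega
  · exact idxE_mono e hemul q.1 p.1 h3
  · exact idyE_mono e hemul q.2 p.2 h4

/-- In the construction, `Ẽ W_(s,t) Ẽ = W_(s,t) Ẽ` for `(s,t) ∈ ℝ₊²`, so
`H := Ran Ẽ` is invariant under the `W_(s,t)`; the restriction `V_(s,t) := W_(s,t)|_H` is a
strongly continuous semigroup of isometries, each `U_(x,y)` maps `H` onto `H`, and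
`(U|_H, V)` is a weak Weyl pair for `P = ℝ₊²`. -/
theorem construction_gives_weak_weyl_pair
        {K : Type*} [NormedAddCommGroup K] [InnerProductSpace ℂ K] [CompleteSpace K]
    [SecondCountableTopology K]
    (Pm Qn : ℕ → K →L[ℂ] K)
    (hPP : ∀ i j, 1 ≤ i → 1 ≤ j → Pm i ∘L Pm j = if i = j then Pm i else 0)
    (hQQ : ∀ i j, 1 ≤ i → 1 ≤ j → Qn i ∘L Qn j = if i = j then Qn i else 0)
    (hPsa : ∀ i, 1 ≤ i → IsSelfAdjoint (Pm i))
    (hQsa : ∀ i, 1 ≤ i → IsSelfAdjoint (Qn i))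
    (a b c d : ℝ) (ha : a ∈ Set.Ioo (0 : ℝ) 1) (hb : b ∈ Set.Ioo (0 : ℝ) 1)
    (hc : c ∈ Set.Ioo (0 : ℝ) 1) (hd : d ∈ Set.Ioo (0 : ℝ) 1) (hab : a < b) (hcd : c < d)
    -- `e S = 1_S(z₀)` for a character `z₀` of `L^∞([0,1]², λ)`
    (e : Set (ℝ × ℝ) → ℂ)
    (he01 : ∀ S : Set (ℝ × ℝ), e S = 0 ∨ e S = 1)
    (heuniv : e Set.univ = 1)
    (hemul : ∀ S T : Set (ℝ × ℝ), MeasurableSet S → MeasurableSet T →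
      e (S ∩ T) = e S * e T)
    (headd : ∀ S T : Set (ℝ × ℝ), MeasurableSet S → MeasurableSet T →
      (volume.restrict (Set.Icc (0 : ℝ) 1 ×ˢ Set.Icc (0 : ℝ) 1)) (S ∩ T) = 0 →
      e (S ∪ T) = e S + e T)
    (henull : ∀ S : Set (ℝ × ℝ), MeasurableSet S →
      (volume.restrict (Set.Icc (0 : ℝ) 1 ×ˢ Set.Icc (0 : ℝ) 1)) S = 0 → e S = 0)
    (hz₀ : e (Set.Icc a b ×ˢ Set.Icc c d) ≠ 0)
    -- the operators `U`, `W` and the projection `Ẽ` on `L = L²(ℝ², K)`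
    (U : ℝ × ℝ → Lp K 2 (volume : Measure (ℝ × ℝ)) →L[ℂ] Lp K 2 (volume : Measure (ℝ × ℝ)))
    (W : ℝ × ℝ → Lp K 2 (volume : Measure (ℝ × ℝ)) →L[ℂ] Lp K 2 (volume : Measure (ℝ × ℝ)))
    (Etil : Lp K 2 (volume : Measure (ℝ × ℝ)) →L[ℂ] Lp K 2 (volume : Measure (ℝ × ℝ)))
    (hUdef : ∀ (x y : ℝ) (f : Lp K 2 (volume : Measure (ℝ × ℝ))),
      ⇑(U (x, y) f) =ᵐ[volume] fun q : ℝ × ℝ =>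
        Complex.exp (Complex.I * ((q.1 * x + q.2 * y : ℝ) : ℂ)) • (f : ℝ × ℝ → K) q)
    (hWdef : ∀ (s t : ℝ) (f : Lp K 2 (volume : Measure (ℝ × ℝ))),
      ⇑(W (s, t) f) =ᵐ[volume] fun q : ℝ × ℝ => (f : ℝ × ℝ → K) (q.1 - s, q.2 - t))
    (hEdef : ∀ f : Lp K 2 (volume : Measure (ℝ × ℝ)),
      ⇑(Etil f) =ᵐ[volume] fun q : ℝ × ℝ => Eproj Pm Qn e q ((f : ℝ × ℝ → K) q)) :
    -- `Ẽ W_(s,t) Ẽ = W_(s,t) Ẽ`, i.e. `H = Ran Ẽ` is invariant under `W_(s,t)`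
    (∀ s t : ℝ, 0 ≤ s → 0 ≤ t →
      Etil ∘L W (s, t) ∘L Etil = W (s, t) ∘L Etil) ∧
    (∀ s t : ℝ, 0 ≤ s → 0 ≤ t →
      Set.MapsTo (W (s, t)) (Set.range ⇑Etil) (Set.range ⇑Etil)) ∧
    -- `W` (hence its restriction `V` to `H`) is a strongly continuous semigroup of isometries
    W (0, 0) = 1 ∧
    (∀ p q : ℝ × ℝ, W (p + q) = W p ∘L W q) ∧
    (∀ (p : ℝ × ℝ) (f : Lp K 2 (volume : Measure (ℝ × ℝ))), ‖W p f‖ = ‖f‖) ∧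
    (∀ f : Lp K 2 (volume : Measure (ℝ × ℝ)), Continuous fun p : ℝ × ℝ => W p f) ∧
    -- `U` is a strongly continuous group of unitaries mapping `H` onto `H`
    U (0, 0) = 1 ∧
    (∀ p q : ℝ × ℝ, U (p + q) = U p ∘L U q) ∧
    (∀ (p : ℝ × ℝ) (f : Lp K 2 (volume : Measure (ℝ × ℝ))), ‖U p f‖ = ‖f‖) ∧
    (∀ f : Lp K 2 (volume : Measure (ℝ × ℝ)), Continuous fun p : ℝ × ℝ => U p f) ∧
    (∀ p : ℝ × ℝ, U p '' Set.range ⇑Etil = Set.range ⇑Etil) ∧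
    -- the weak Weyl commutation relation
    (∀ x y s t : ℝ, 0 ≤ s → 0 ≤ t →
      U (x, y) ∘L W (s, t) =
        Complex.exp (Complex.I * ((s * x + t * y : ℝ) : ℂ)) • (W (s, t) ∘L U (x, y))) := by
  haveI : Fact ((1 : ENNReal) ≤ 2) := ⟨one_le_two⟩
  haveI : Fact ((2 : ENNReal) ≠ ⊤) := ⟨by norm_num⟩
  haveI : ContinuousVAdd ((ℝ × ℝ)ᵈᵃᵃ) (Lp K 2 (volume : Measure (ℝ × ℝ))) :=
    MeasureTheory.Lp.instContinuousVAddDomAddAct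
  -- composing a.e.-equalities with translations
  have h_transl : ∀ (p : ℝ × ℝ) (g h : ℝ × ℝ → K), g =ᵐ[volume] h →
      (fun q : ℝ × ℝ => g (q - p)) =ᵐ[volume] (fun q => h (q - p)) := fun p g h hgh =>
    (measurePreserving_sub_right volume p).quasiMeasurePreserving.ae_eq_comp hgh
  -- `W p f` as a domain-translation action
  have hWvadd : ∀ (p : ℝ × ℝ) (f : Lp K 2 (volume : Measure (ℝ × ℝ))),
      W p f = (DomAddAct.mk (-p) : (ℝ × ℝ)ᵈᵃᵃ) +ᵥ f := by
    intro p f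
    apply Lp.ext
    filter_upwards [hWdef p.1 p.2 f,
      DomAddAct.vadd_Lp_ae_eq (DomAddAct.mk (-p) : (ℝ × ℝ)ᵈᵃᵃ) f] with q hq1 hq2
    simp only [hq1, hq2]
    have h1 : (DomAddAct.mk.symm (DomAddAct.mk (-p) : (ℝ × ℝ)ᵈᵃᵃ)) +ᵥ q
        = (q.1 - p.1, q.2 - p.2) := by
      show -p + q = (q.1 - p.1, q.2 - p.2)
      rw [neg_add_eq_sub]
      rfl
    rw [h1]
  -- Part 1
  have part1 : ∀ s t : ℝ, 0 ≤ s → 0 ≤ t →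
      Etil ∘L W (s, t) ∘L Etil = W (s, t) ∘L Etil := by
    intro s t hs ht
    refine ContinuousLinearMap.ext fun f => ?_
    simp only [ContinuousLinearMap.comp_apply]
    have hA : ⇑(W (s, t) (Etil f)) =ᵐ[volume]
        fun q : ℝ × ℝ => Eproj Pm Qn e (q.1 - s, q.2 - t) ((f : ℝ × ℝ → K) (q.1 - s, q.2 - t)) :=
      (hWdef s t (Etil f)).trans (h_transl (s, t) _ _ (hEdef f))
    have hB : ⇑(Etil (W (s, t) (Etil f))) =ᵐ[volume]
        fun q : ℝ × ℝ => Eproj Pm Qn e q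
          (Eproj Pm Qn e (q.1 - s, q.2 - t) ((f : ℝ × ℝ → K) (q.1 - s, q.2 - t))) :=
      (hEdef _).trans (hA.mono fun q hq => congrArg (Eproj Pm Qn e q) hq)
    have hC : ∀ q : ℝ × ℝ,
        Eproj Pm Qn e q (Eproj Pm Qn e (q.1 - s, q.2 - t) ((f : ℝ × ℝ → K) (q.1 - s, q.2 - t)))
          = Eproj Pm Qn e (q.1 - s, q.2 - t) ((f : ℝ × ℝ → K) (q.1 - s, q.2 - t)) := by
      intro q
      by_cases hq : 0 ≤ q.1 - s ∧ 0 ≤ q.2 - t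
      · have hcomp := Eproj_comp Pm Qn hPP hQQ e he01 heuniv hemul headd henull
          q (q.1 - s, q.2 - t) hq.1 hq.2 (by simp only; linarith) (by simp only; linarith)
        exact DFunLike.congr_fun hcomp _
      · have hz : Eproj Pm Qn e (q.1 - s, q.2 - t) = 0 := by
          simp only [Eproj]; rw [if_neg hq]
        rw [hz]; simp
    apply Lp.ext
    filter_upwards [hB, hA] with q hq1 hq2
    rw [hq1, hq2]
    exact hC q
  have part3 : W (0, 0) = 1 := by
    refine ContinuousLinearMap.ext fun f => ?_
    rw [ContinuousLinearMap.one_apply]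
    apply Lp.ext
    filter_upwards [hWdef 0 0 f] with q hq
    rw [hq]
    simp
  have part4 : ∀ p q : ℝ × ℝ, W (p + q) = W p ∘L W q := by
    intro p q
    refine ContinuousLinearMap.ext fun f => ?_
    simp only [ContinuousLinearMap.comp_apply]
    have h1 : ⇑(W (p + q) f) =ᵐ[volume]
        fun r : ℝ × ℝ => (f : ℝ × ℝ → K) (r.1 - (p.1 + q.1), r.2 - (p.2 + q.2)) :=
      hWdef (p.1 + q.1) (p.2 + q.2) f
    have h2 : ⇑(W p (W q f)) =ᵐ[volume]
        fun r : ℝ × ℝ => (f : ℝ × ℝ → K) (r.1 - p.1 - q.1, r.2 - p.2 - q.2) :=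
      (hWdef p.1 p.2 (W q f)).trans (h_transl p _ _ (hWdef q.1 q.2 f))
    apply Lp.ext
    filter_upwards [h1, h2] with r hr1 hr2
    rw [hr1, hr2, sub_sub, sub_sub]
  have part5 : ∀ (p : ℝ × ℝ) (f : Lp K 2 (volume : Measure (ℝ × ℝ))), ‖W p f‖ = ‖f‖ := by
    intro p f
    rw [hWvadd]
    exact DomAddAct.norm_vadd_Lp _ f
  have part6 : ∀ f : Lp K 2 (volume : Measure (ℝ × ℝ)),
      Continuous fun p : ℝ × ℝ => W p f := by
    intro f
    have : (fun p : ℝ × ℝ => W p f)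
        = fun p : ℝ × ℝ => (DomAddAct.mk (-p) : (ℝ × ℝ)ᵈᵃᵃ) +ᵥ f :=
      funext fun p => hWvadd p f
    rw [this]
    fun_prop
  have part2 : ∀ s t : ℝ, 0 ≤ s → 0 ≤ t →
      Set.MapsTo (W (s, t)) (Set.range ⇑Etil) (Set.range ⇑Etil) := by
    intro s t hs ht
    rintro x ⟨f, rfl⟩
    exact ⟨W (s, t) (Etil f), DFunLike.congr_fun (part1 s t hs ht) f⟩
  have part7 : U (0, 0) = 1 := by
    refine ContinuousLinearMap.ext fun f => ?_
    rw [ContinuousLinearMap.one_apply]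
    apply Lp.ext
    filter_upwards [hUdef 0 0 f] with q hq
    rw [hq]
    simp
  have part8 : ∀ p q : ℝ × ℝ, U (p + q) = U p ∘L U q := by
    intro p q
    refine ContinuousLinearMap.ext fun f => ?_
    simp only [ContinuousLinearMap.comp_apply]
    have h1 : ⇑(U (p + q) f) =ᵐ[volume]
        fun r : ℝ × ℝ =>
          Complex.exp (Complex.I * ((r.1 * (p.1 + q.1) + r.2 * (p.2 + q.2) : ℝ) : ℂ))
            • (f : ℝ × ℝ → K) r :=
      hUdef (p.1 + q.1) (p.2 + q.2) f
    have h2 : ⇑(U p (U q f)) =ᵐ[volume]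
        fun r : ℝ × ℝ =>
          Complex.exp (Complex.I * ((r.1 * p.1 + r.2 * p.2 : ℝ) : ℂ))
            • (Complex.exp (Complex.I * ((r.1 * q.1 + r.2 * q.2 : ℝ) : ℂ))
              • (f : ℝ × ℝ → K) r) :=
      (hUdef p.1 p.2 (U q f)).trans ((hUdef q.1 q.2 f).mono fun r hr =>
        congrArg (Complex.exp (Complex.I * ((r.1 * p.1 + r.2 * p.2 : ℝ) : ℂ)) • ·) hr)
    apply Lp.ext
    filter_upwards [h1, h2] with r hr1 hr2
    rw [hr1, hr2, smul_smul, ← Complex.exp_add]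
    congr 1
    push_cast
    ring
  have part9 : ∀ (p : ℝ × ℝ) (f : Lp K 2 (volume : Measure (ℝ × ℝ))), ‖U p f‖ = ‖f‖ := by
    intro p f
    rw [Lp.norm_def, Lp.norm_def]
    congr 1
    refine eLpNorm_congr_norm_ae ?_
    refine (hUdef p.1 p.2 f).mono fun q hq => ?_
    rw [hq, norm_smul, mul_comm Complex.I, Complex.norm_exp_ofReal_mul_I, one_mul]
  have hUcomm : ∀ (p : ℝ × ℝ) (f : Lp K 2 (volume : Measure (ℝ × ℝ))),
      U p (Etil f) = Etil (U p f) := by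
    intro p f
    have h2 : ⇑(U p (Etil f)) =ᵐ[volume]
        fun q : ℝ × ℝ => Complex.exp (Complex.I * ((q.1 * p.1 + q.2 * p.2 : ℝ) : ℂ))
          • Eproj Pm Qn e q ((f : ℝ × ℝ → K) q) :=
      (hUdef p.1 p.2 (Etil f)).trans ((hEdef f).mono fun q hq =>
        congrArg (Complex.exp (Complex.I * ((q.1 * p.1 + q.2 * p.2 : ℝ) : ℂ)) • ·) hq)
    have h3 : ⇑(Etil (U p f)) =ᵐ[volume]
        fun q : ℝ × ℝ => Eproj Pm Qn e q
          (Complex.exp (Complex.I * ((q.1 * p.1 + q.2 * p.2 : ℝ) : ℂ)) • (f : ℝ × ℝ → K) q) :=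
      (hEdef (U p f)).trans ((hUdef p.1 p.2 f).mono fun q hq =>
        congrArg (Eproj Pm Qn e q) hq)
    apply Lp.ext
    filter_upwards [h2, h3] with q hq2 hq3
    rw [hq2, hq3]
    exact ((Eproj Pm Qn e q).map_smul _ _).symm
  have part11 : ∀ p : ℝ × ℝ, U p '' Set.range ⇑Etil = Set.range ⇑Etil := by
    intro p
    have hUinv : ∀ g : Lp K 2 (volume : Measure (ℝ × ℝ)), U p (U (-p) g) = g := by
      intro g
      have h := part8 p (-p)
      rw [add_neg_cancel] at h
      have h0 : U (0 : ℝ × ℝ) = 1 := part7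
      rw [h0] at h
      exact (DFunLike.congr_fun h.symm g)
    apply Set.Subset.antisymm
    · rintro x ⟨y, ⟨f, rfl⟩, rfl⟩
      exact ⟨U p f, (hUcomm p f).symm ▸ (hUcomm p f)⟩
    · rintro x ⟨f, rfl⟩
      exact ⟨U (-p) (Etil f), ⟨U (-p) f, (hUcomm (-p) f).symm⟩, hUinv (Etil f)⟩
  have part10 : ∀ f : Lp K 2 (volume : Measure (ℝ × ℝ)),
      Continuous fun p : ℝ × ℝ => U p f := by
    intro f
    rw [continuous_iff_continuousAt]
    intro p₀
    show Filter.Tendsto (fun p : ℝ × ℝ => U p f) (nhds p₀) (nhds (U p₀ f))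
    rw [Lp.tendsto_Lp_iff_tendsto_eLpNorm' (fun p : ℝ × ℝ => U p f) (U p₀ f)]
    set G : (ℝ × ℝ) → (ℝ × ℝ) → K := fun p q =>
      (Complex.exp (Complex.I * ((q.1 * p.1 + q.2 * p.2 : ℝ) : ℂ)) -
        Complex.exp (Complex.I * ((q.1 * p₀.1 + q.2 * p₀.2 : ℝ) : ℂ))) • (f : ℝ × ℝ → K) q
      with hGdef
    have hdiff : ∀ p : ℝ × ℝ, (⇑(U p f) - ⇑(U p₀ f)) =ᵐ[volume] G p := by
      intro p
      filter_upwards [hUdef p.1 p.2 f, hUdef p₀.1 p₀.2 f] with q h1 h2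
      simp only [Pi.sub_apply, h1, h2, hGdef, sub_smul]
    have hGmeas : ∀ p : ℝ × ℝ, StronglyMeasurable (G p) := by
      intro p
      exact (Continuous.stronglyMeasurable (by fun_prop)).smul (Lp.stronglyMeasurable f)
    have hfin : ∫⁻ q : ℝ × ℝ, 4 * ((‖(f : ℝ × ℝ → K) q‖₊ : ENNReal) ^ (2:ℝ)) ∂volume ≠ ⊤ := by
      rw [lintegral_const_mul 4 ((Lp.stronglyMeasurable f).nnnorm.measurable.coe_nnreal_ennreal.pow_const (2:ℝ))]
      refine ENNReal.mul_ne_top (by norm_num) ?_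
      have hlt := (eLpNorm_lt_top_iff_lintegral_rpow_enorm_lt_top
        (f := (f : ℝ × ℝ → K)) (μ := (volume : Measure (ℝ × ℝ)))
        (by norm_num) (by norm_num)).1 (Lp.eLpNorm_lt_top f)
      rw [show ((2:ENNReal).toReal) = (2:ℝ) by norm_num] at hlt
      exact hlt.ne
    have htwo : ((2:ENNReal) ^ (2:ℝ)) = 4 := by
      rw [show (2:ℝ) = ((2:ℕ):ℝ) by norm_num, ENNReal.rpow_natCast]
      norm_num
    have hbound : ∀ p : ℝ × ℝ, ∀ q : ℝ × ℝ,
        ((‖G p q‖₊ : ENNReal) ^ (2:ℝ)) ≤ 4 * ((‖(f : ℝ × ℝ → K) q‖₊ : ENNReal) ^ (2:ℝ)) := by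
      intro p q
      have hsc : ‖Complex.exp (Complex.I * ((q.1 * p.1 + q.2 * p.2 : ℝ) : ℂ)) -
          Complex.exp (Complex.I * ((q.1 * p₀.1 + q.2 * p₀.2 : ℝ) : ℂ))‖ ≤ 2 := by
        refine (norm_sub_le _ _).trans ?_
        rw [mul_comm Complex.I, mul_comm Complex.I,
          Complex.norm_exp_ofReal_mul_I, Complex.norm_exp_ofReal_mul_I]
        norm_num
      have hG : (‖G p q‖₊ : ENNReal) ≤ 2 * (‖(f : ℝ × ℝ → K) q‖₊ : ENNReal) := by
        have h1 : ‖G p q‖₊ ≤ (2 : NNReal) * ‖(f : ℝ × ℝ → K) q‖₊ := by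
          rw [hGdef]
          simp only [nnnorm_smul]
          refine mul_le_mul_of_nonneg_right ?_ zero_le
          exact_mod_cast hsc
        calc (‖G p q‖₊ : ENNReal) ≤ (((2 : NNReal) * ‖(f : ℝ × ℝ → K) q‖₊ : NNReal) : ENNReal) :=
              ENNReal.coe_le_coe.2 h1
          _ = 2 * (‖(f : ℝ × ℝ → K) q‖₊ : ENNReal) := by push_cast; ring
      calc ((‖G p q‖₊ : ENNReal) ^ (2:ℝ))
          ≤ (2 * (‖(f : ℝ × ℝ → K) q‖₊ : ENNReal)) ^ (2:ℝ) :=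
            ENNReal.rpow_le_rpow hG (by norm_num)
        _ = ((2:ENNReal) ^ (2:ℝ)) * ((‖(f : ℝ × ℝ → K) q‖₊ : ENNReal) ^ (2:ℝ)) :=
            ENNReal.mul_rpow_of_nonneg _ _ (by norm_num)
        _ = 4 * ((‖(f : ℝ × ℝ → K) q‖₊ : ENNReal) ^ (2:ℝ)) := by rw [htwo]
    have hDCT : Filter.Tendsto
        (fun p : ℝ × ℝ => ∫⁻ q, ((‖G p q‖₊ : ENNReal) ^ (2:ℝ)) ∂volume)
        (nhds p₀) (nhds (∫⁻ _ : ℝ × ℝ, 0 ∂volume)) := by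
      refine MeasureTheory.tendsto_lintegral_filter_of_dominated_convergence
        (fun q : ℝ × ℝ => 4 * ((‖(f : ℝ × ℝ → K) q‖₊ : ENNReal) ^ (2:ℝ)))
        (Filter.Eventually.of_forall fun p => ((hGmeas p).nnnorm.measurable.coe_nnreal_ennreal.pow_const (2:ℝ)))
        (Filter.Eventually.of_forall fun p => Filter.Eventually.of_forall (hbound p))
        hfin
        (Filter.Eventually.of_forall fun q => ?_)
      have hcont : Continuous fun p : ℝ × ℝ => ((‖G p q‖₊ : ENNReal) ^ (2:ℝ)) := by
        refine ENNReal.continuous_rpow_const.comp ?_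
        refine ENNReal.continuous_coe.comp ?_
        refine Continuous.nnnorm ?_
        have : Continuous fun p : ℝ × ℝ =>
            (Complex.exp (Complex.I * ((q.1 * p.1 + q.2 * p.2 : ℝ) : ℂ)) -
              Complex.exp (Complex.I * ((q.1 * p₀.1 + q.2 * p₀.2 : ℝ) : ℂ))) := by fun_prop
        exact this.smul continuous_const
      have := hcont.tendsto p₀
      simpa [hGdef, ENNReal.zero_rpow_of_pos] using this
    rw [lintegral_zero] at hDCT
    have hmain : Filter.Tendsto
        (fun p : ℝ × ℝ => (∫⁻ q, ((‖G p q‖₊ : ENNReal) ^ (2:ℝ)) ∂volume) ^ (1/2 : ℝ))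
        (nhds p₀) (nhds 0) := by
      have hc : Filter.Tendsto (fun x : ENNReal => x ^ (1/2 : ℝ)) (nhds 0) (nhds ((0:ENNReal) ^ (1/2:ℝ))) :=
        ENNReal.continuous_rpow_const.tendsto 0
      rw [ENNReal.zero_rpow_of_pos (by norm_num)] at hc
      exact hc.comp hDCT
    refine Filter.Tendsto.congr (fun p => ?_) hmain
    rw [eLpNorm_congr_ae (hdiff p), eLpNorm_eq_lintegral_rpow_enorm_toReal (by norm_num) (by norm_num)]
    norm_num
    rfl
  have part12 : ∀ x y s t : ℝ, 0 ≤ s → 0 ≤ t →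
      U (x, y) ∘L W (s, t) =
        Complex.exp (Complex.I * ((s * x + t * y : ℝ) : ℂ)) • (W (s, t) ∘L U (x, y)) := by
    intro x y s t hs ht
    refine ContinuousLinearMap.ext fun f => ?_
    simp only [ContinuousLinearMap.comp_apply, ContinuousLinearMap.smul_apply]
    have h1 : ⇑(U (x, y) (W (s, t) f)) =ᵐ[volume]
        fun q : ℝ × ℝ => Complex.exp (Complex.I * ((q.1 * x + q.2 * y : ℝ) : ℂ))
          • (f : ℝ × ℝ → K) (q.1 - s, q.2 - t) :=
      (hUdef x y (W (s, t) f)).trans ((hWdef s t f).mono fun q hq =>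
        congrArg (Complex.exp (Complex.I * ((q.1 * x + q.2 * y : ℝ) : ℂ)) • ·) hq)
    have h2 : ⇑(Complex.exp (Complex.I * ((s * x + t * y : ℝ) : ℂ)) • W (s, t) (U (x, y) f))
        =ᵐ[volume] fun q : ℝ × ℝ =>
          Complex.exp (Complex.I * ((s * x + t * y : ℝ) : ℂ)) •
            (Complex.exp (Complex.I * (((q.1 - s) * x + (q.2 - t) * y : ℝ) : ℂ))
              • (f : ℝ × ℝ → K) (q.1 - s, q.2 - t)) := by
      refine (Lp.coeFn_smul _ _).trans ?_
      refine (((hWdef s t (U (x, y) f)).trans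
        (h_transl (s, t) _ _ (hUdef x y f))).mono fun q hq => ?_)
      simp only [Pi.smul_apply]
      rw [show ((W (s, t)) ((U (x, y)) f) : ℝ × ℝ → K) q
        = Complex.exp (Complex.I * (((q.1 - s) * x + (q.2 - t) * y : ℝ) : ℂ))
          • (f : ℝ × ℝ → K) (q.1 - s, q.2 - t) from hq]
    apply Lp.ext
    filter_upwards [h1, h2] with q hq1 hq2
    rw [hq1, hq2, smul_smul, ← Complex.exp_add]
    congr 2
    push_cast
    ring
  exact ⟨part1, part2, part3, part4, part5, part6, part7, part8, part9, part10, part11, part12⟩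
end
end
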